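/- arXiv:1006.3436 — 6 statements merged into one kernel-verified Lean document; each statement's English description precedes it below -/
import Mathlib

section
/- Let F be a sequence of the form f_n = Σ_{k=1}^m P_k(n) λ_k^n with distinct nonzero λ_k, nonzero polynomials P_k, and characteristic polynomial P(z) = Π_k (z − λ_k)^{ν_k} where ν_k = deg P_k + 1. Then F satisfies the LRF with coefficients (−b_0/b_r, …, −b_{r-1}/b_r) determined by a monically-scalable polynomial B(z) = b_r z^r + … + b_0 (b_r ≠ 0), i.e., f_{n+r} = −Σ_{k=0}^{r-1} (b_k/b_r) f_{n+k} for all n, if and only if P(z) divides B(z). -/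
/-!
Let `E` be the shift on sequences, so that `f` satisfies the recurrence encoded by `B` exactly when
`B(E) f = 0`. Since `(E - λ) (n ↦ q n λⁿ) = (n ↦ λⁿ⁺¹ (Δq) n)`, the `k`-th power of `E - λ` turns
`n ↦ Q(n) λⁿ` into `n ↦ λⁿ⁺ᵏ (Δᵏ Q)(n)`, which vanishes for `k = deg Q + 1` but not for
`k = deg Q`. As `X - λ` is irreducible, the polynomials killing `n ↦ Q(n) λⁿ` are therefore exactly
the multiples of `(X - λ)^(deg Q + 1)`. For a sum of sequences whose annihilators are generated by
pairwise coprime polynomials, the annihilator is generated by their product.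
-/

open Function Polynomial Finset fwdDiff

section Annihilator

variable {R M : Type*} [CommRing R] [AddCommGroup M] [Module R M] (φ : Module.End R M)

theorem aeval_mul_apply (p q : R[X]) (x : M) : aeval φ (p * q) x = aeval φ p (aeval φ q x) := by
  rw [map_mul, Module.End.mul_apply]

theorem aeval_apply_eq_zero_of_dvd {p B : R[X]} {x : M} (hp : aeval φ p x = 0) (hpB : p ∣ B) :
    aeval φ B x = 0 := by
  obtain ⟨c, rfl⟩ := hpB
  rw [mul_comm, aeval_mul_apply, hp, map_zero]

theorem aeval_add_eq_zero_iff_of_isCoprime {x y : M} {p q : R[X]} (hpq : IsCoprime p q)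
    (hx : ∀ B, aeval φ B x = 0 ↔ p ∣ B) (hy : ∀ B, aeval φ B y = 0 ↔ q ∣ B) (B : R[X]) :
    aeval φ B (x + y) = 0 ↔ p * q ∣ B := by
  refine ⟨fun h => ?_, fun h => ?_⟩
  · rw [map_add] at h
    have hp : p ∣ q * B := (hx _).1 <| by
      rw [aeval_mul_apply, eq_neg_of_add_eq_zero_left h, map_neg, ← aeval_mul_apply, mul_comm,
        aeval_mul_apply, (hy q).2 dvd_rfl, map_zero, neg_zero]
    have hq : q ∣ p * B := (hy _).1 <| by
      rw [aeval_mul_apply, eq_neg_of_add_eq_zero_right h, map_neg, ← aeval_mul_apply, mul_comm,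
        aeval_mul_apply, (hx p).2 dvd_rfl, map_zero, neg_zero]
    exact hpq.mul_dvd (hpq.dvd_of_dvd_mul_left hp) (hpq.symm.dvd_of_dvd_mul_left hq)
  · rw [map_add, (hx B).2 (dvd_of_mul_right_dvd h), (hy B).2 (dvd_of_mul_left_dvd h), add_zero]

theorem aeval_sum_eq_zero_iff_of_pairwise_isCoprime {ι : Type*} (s : Finset ι) (x : ι → M)
    (p : ι → R[X]) (hp : (s : Set ι).Pairwise (IsCoprime on p))
    (hx : ∀ i ∈ s, ∀ B, aeval φ B (x i) = 0 ↔ p i ∣ B) (B : R[X]) :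
    aeval φ B (∑ i ∈ s, x i) = 0 ↔ ∏ i ∈ s, p i ∣ B := by
  induction s using Finset.cons_induction generalizing B with
  | empty => simp
  | cons i s hi ih =>
    rw [coe_cons, Set.pairwise_insert] at hp
    rw [sum_cons, prod_cons]
    refine aeval_add_eq_zero_iff_of_isCoprime φ
      (IsCoprime.prod_right fun j hj => (hp.2 j hj (ne_of_mem_of_not_mem hj hi).symm).1)
      (hx i (mem_cons_self i s)) (ih hp.1 fun j hj => hx j (mem_cons_of_mem hj)) B

end Annihilator

section Irreducible

variable {K M : Type*} [Field K] [AddCommGroup M] [Module K M] (φ : Module.End K M)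

theorem dvd_of_aeval_apply_eq_zero {p B : K[X]} (hp : Irreducible p) {x : M} (hx : x ≠ 0)
    (hpx : aeval φ p x = 0) (hBx : aeval φ B x = 0) : p ∣ B := by
  by_contra h
  obtain ⟨u, v, huv⟩ := hp.coprime_iff_not_dvd.2 h
  apply hx
  calc x = aeval φ (u * p + v * B) x := by rw [huv, map_one, Module.End.one_apply]
    _ = 0 := by rw [map_add, LinearMap.add_apply, aeval_mul_apply, aeval_mul_apply, hpx, hBx,
      map_zero, map_zero, add_zero]

theorem aeval_apply_eq_zero_iff_pow_dvd {p : K[X]} (hp : Irreducible p) {x : M} {k : ℕ}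
    (hk : aeval φ (p ^ k) x ≠ 0) (hk1 : aeval φ (p ^ (k + 1)) x = 0) (B : K[X]) :
    aeval φ B x = 0 ↔ p ^ (k + 1) ∣ B := by
  refine ⟨fun hB => ?_, aeval_apply_eq_zero_of_dvd φ hk1⟩
  induction k generalizing x B with
  | zero =>
    rw [pow_zero, map_one, Module.End.one_apply] at hk
    rw [zero_add, pow_one] at hk1 ⊢
    exact dvd_of_aeval_apply_eq_zero φ hp hk hk1 hB
  | succ k ih =>
    have hpB : p ∣ B := dvd_of_aeval_apply_eq_zero φ hp hk
      (by rw [← aeval_mul_apply, ← pow_succ']; exact hk1)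
      (by rw [← aeval_mul_apply, mul_comm, aeval_mul_apply, hB, map_zero])
    obtain ⟨B', rfl⟩ := hpB
    rw [pow_succ']
    refine mul_dvd_mul_left p (ih (x := aeval φ p x) ?_ ?_ B' ?_)
    · rwa [← aeval_mul_apply, ← pow_succ]
    · rwa [← aeval_mul_apply, ← pow_succ]
    · rwa [← aeval_mul_apply, mul_comm]

end Irreducible

section Shift

variable (K : Type*) [CommRing K]

def seqShift : Module.End K (ℕ → K) := LinearMap.funLeft K K Nat.succ

variable {K}

theorem seqShift_pow_apply (x : ℕ → K) (k n : ℕ) : (seqShift K ^ k) x n = x (n + k) := by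
  induction k generalizing x with
  | zero => rfl
  | succ k ih => rw [pow_succ, Module.End.mul_apply, ih]; rfl

theorem aeval_seqShift_sum_apply (s : Finset ℕ) (b : ℕ → K) (x : ℕ → K) (n : ℕ) :
    aeval (seqShift K) (∑ k ∈ s, C (b k) * X ^ k) x n = ∑ k ∈ s, b k * x (n + k) := by
  simp [map_sum, ← smul_eq_C_mul, seqShift_pow_apply]

theorem aeval_seqShift_X_sub_C_mul_pow (q : ℕ → K) (a : K) :
    aeval (seqShift K) (X - C a) (fun n => q n * a ^ n) = fun n => (a • Δ_[1] q) n * a ^ n := by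
  funext n
  simp only [map_sub, aeval_X, aeval_C, LinearMap.sub_apply, Module.algebraMap_end_apply,
    seqShift, Pi.sub_apply, LinearMap.funLeft_apply, Nat.succ_eq_add_one, Pi.smul_apply,
    smul_eq_mul, fwdDiff]
  ring

theorem aeval_seqShift_X_sub_C_pow_mul_pow (q : ℕ → K) (a : K) (k : ℕ) :
    aeval (seqShift K) ((X - C a) ^ k) (fun n => q n * a ^ n) =
      fun n => ((Δ_[1])^[k] q) n * a ^ (n + k) := by
  induction k generalizing q with
  | zero => simp
  | succ k ih =>
    rw [pow_succ, aeval_mul_apply, aeval_seqShift_X_sub_C_mul_pow, ih, Function.iterate_succ_apply,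
      fwdDiff_iter_const_smul]
    funext n
    simp only [Pi.smul_apply, smul_eq_mul]
    ring

end Shift

theorem fwdDiff_iter_comp_natCast {K G : Type*} [AddCommMonoidWithOne K] [AddCommGroup G]
    (g : K → G) (k : ℕ) : (Δ_[1])^[k] (fun n : ℕ => g n) = fun n : ℕ => ((Δ_[1])^[k] g) n := by
  induction k generalizing g with
  | zero => rfl
  | succ k ih =>
    have hstep : Δ_[1] (fun n : ℕ => g n) = fun n : ℕ => (Δ_[1] g) n := by
      funext n
      simp [fwdDiff]
    rw [Function.iterate_succ_apply, hstep, ih]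
    rfl

theorem aeval_seqShift_eval_mul_pow_eq_zero_iff {K : Type*} [Field K] [CharZero K] {Q : K[X]}
    (hQ : Q ≠ 0) {a : K} (ha : a ≠ 0) (B : K[X]) :
    aeval (seqShift K) B (fun n => Q.eval (n : K) * a ^ n) = 0 ↔
      (X - C a) ^ (Q.natDegree + 1) ∣ B := by
  refine aeval_apply_eq_zero_iff_pow_dvd _ (irreducible_X_sub_C a) ?_ ?_ B <;>
    rw [aeval_seqShift_X_sub_C_pow_mul_pow, fwdDiff_iter_comp_natCast (eval · Q)]
  · rw [fwdDiff_iter_degree_eq_factorial]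
    intro h
    have h0 := congrFun h 0
    simp [Pi.natCast_apply, hQ, ha, Nat.factorial_ne_zero] at h0
  · rw [fwdDiff_iter_degree_add_one_eq_zero]
    funext n
    simp

theorem lrf_iff_sum_eq_zero {K : Type*} [Field K] (x : ℕ → K) (r : ℕ) (b : ℕ → K) (hbr : b r ≠ 0)
    (n : ℕ) : x (n + r) = -∑ k ∈ range r, b k / b r * x (n + k) ↔
      ∑ k ∈ range (r + 1), b k * x (n + k) = 0 := by
  have hsum : ∑ k ∈ range (r + 1), b k * x (n + k) =
      b r * (x (n + r) + ∑ k ∈ range r, b k / b r * x (n + k)) := by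
    rw [sum_range_succ, mul_add, mul_sum, add_comm]
    congr 1
    exact sum_congr rfl fun k _ => by field_simp
  rw [hsum, mul_eq_zero, or_iff_right hbr, eq_neg_iff_add_eq_zero]

/-- A sequence of finite difference dimension with characteristic polynomial
`P(z) = ∏ (z - λ k)^(deg Pₖ + 1)` satisfies the LRF encoded by a polynomial
`B(z) = b_r z^r + … + b_0` (with `b_r ≠ 0`) if and only if `P ∣ B`. -/
theorem lrf_iff_charpoly_dvd
    (f : ℕ → ℂ) (m : ℕ) (lam : Fin m → ℂ) (P : Fin m → Polynomial ℂ)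
    (hinj : Function.Injective lam) (hne : ∀ k, lam k ≠ 0) (hP : ∀ k, P k ≠ 0)
    (hf : ∀ n : ℕ, f n = ∑ k, (P k).eval (n : ℂ) * lam k ^ n)
    (r : ℕ) (b : ℕ → ℂ) (hbr : b r ≠ 0) :
    (∀ n : ℕ, f (n + r) = -∑ k ∈ Finset.range r, (b k / b r) * f (n + k)) ↔
      (∏ k, (X - C (lam k)) ^ ((P k).natDegree + 1)) ∣
        (∑ k ∈ Finset.range (r + 1), C (b k) * X ^ k) := by
  have hf_sum : f = ∑ k, fun n : ℕ => (P k).eval (n : ℂ) * lam k ^ n :=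
    funext fun n => by rw [hf n, Finset.sum_apply]
  have hrec : (∀ n : ℕ, f (n + r) = -∑ k ∈ Finset.range r, (b k / b r) * f (n + k)) ↔
      aeval (seqShift ℂ) (∑ k ∈ Finset.range (r + 1), C (b k) * X ^ k) f = 0 := by
    simp only [lrf_iff_sum_eq_zero f r b hbr, funext_iff, aeval_seqShift_sum_apply, Pi.zero_apply]
  rw [hrec, hf_sum]
  exact aeval_sum_eq_zero_iff_of_pairwise_isCoprime _ _ _ _
    (fun i _ j _ hij => (pairwise_coprime_X_sub_C hinj hij).pow)
    (fun k _ => aeval_seqShift_eval_mul_pow_eq_zero_iff (hP k) (hne k)) _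
end

section
/- Let F_N be a time series of difference dimension d with distinct signal roots λ_1,…,λ_m of multiplicities ν_1,…,ν_m, and d < L ≤ N−d+1. Then the d vectors ℓ^k_L(λ_j) = (∂^k/∂λ^k)(1, λ, λ², …, λ^{L-1})^T evaluated at λ = λ_j, for 1 ≤ j ≤ m and 0 ≤ k < ν_j, form a basis of the trajectory space 𝔏^{(L)}(F_N). -/
/-!
Write `f n = ∑ j, P_j(n) λ_j ^ n` and let `S` be the shift on sequences. Since
`(S - λ) (Q(n) λ ^ n) = λ ^ (n + 1) (ΔQ)(n)` with `Δ` the forward difference, for `λ ≠ 0` the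
operator `(S - λ) ^ ν` kills `Q(n) λ ^ n` iff `deg Q < ν`; hence the polynomials `c` with
`c(S) f = 0` are exactly the multiples of `∏ j, (X - λ_j) ^ ν_j`, of degree `d`. A solution of this order-`d` recurrence that
vanishes at `d` consecutive indices is zero, so windows of length `L ≥ d` are injective on
exponential-polynomial sequences. Up to the factor `λ ^ k`, `ℓ^k_L(λ)` is the window of
`n ↦ (n)_k λ ^ n` (descending Pochhammer), which gives the independence of the `ℓ`-vectors; a
relation between the first `d` lagged vectors gives a polynomial of degree `< d` annihilating `f`,
so they are independent as well. Every lagged vector is the window of `n ↦ f (n + s)`, again of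
the same exponential-polynomial shape, so it lies in the span of the `ℓ`-vectors, and counting
dimensions gives equality.
-/

open Polynomial Finset

/-- Trajectory space: span of lagged vectors of the first `N` values of `f`. -/
noncomputable def trajSpace (f : ℕ → ℂ) (N L : ℕ) : Submodule ℂ (Fin L → ℂ) :=
  Submodule.span ℂ {v : Fin L → ℂ | ∃ i : ℕ, i + L ≤ N ∧ v = fun j : Fin L => f (i + (j : ℕ))}

/-- The vector `ℓ^k_L(λ)`: componentwise `k`-th derivative in `λ` of
`(1, λ, λ², …, λ^{L-1})`. -/
noncomputable def ellVec (L : ℕ) (k : ℕ) (lam : ℂ) : Fin L → ℂ :=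
  fun i => (Polynomial.derivative^[k] ((X : Polynomial ℂ) ^ (i : ℕ))).eval lam

namespace ExpPolySeq

variable {K : Type*} [Field K]

noncomputable def seqShift : Module.End K (ℕ → K) := LinearMap.funLeft K K Nat.succ

lemma seqShift_pow_apply (t : ℕ) (u : ℕ → K) (n : ℕ) : (seqShift ^ t) u n = u (n + t) := by
  induction t generalizing u with
  | zero => rfl
  | succ t ih => rw [pow_succ, Module.End.mul_apply, ih]; rfl

lemma aeval_seqShift_apply (p : K[X]) (u : ℕ → K) (n : ℕ) :
    aeval seqShift p u n = ∑ t ∈ range (p.natDegree + 1), p.coeff t * u (n + t) := by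
  rw [aeval_eq_sum_range, LinearMap.sum_apply, Finset.sum_apply]
  simp [seqShift_pow_apply]

variable (K) in
noncomputable def window (L : ℕ) : (ℕ → K) →ₗ[K] Fin L → K :=
  LinearMap.funLeft K K Fin.val

noncomputable def expPoly (a : K) : K[X] →ₗ[K] ℕ → K where
  toFun Q n := Q.eval (n : K) * a ^ n
  map_add' Q R := by ext n; simp [add_mul]
  map_smul' c Q := by ext n; simp [mul_assoc]

@[simp] lemma expPoly_apply (a : K) (Q : K[X]) (n : ℕ) : expPoly a Q n = Q.eval (n : K) * a ^ n :=
  rfl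

lemma expPoly_add_apply (a : K) (Q : K[X]) (i n : ℕ) :
    expPoly a Q (i + n) = expPoly a (a ^ i • taylor (i : K) Q) n := by
  rw [expPoly_apply, expPoly_apply, eval_smul, taylor_eval, Nat.cast_add, add_comm (n : K),
    pow_add, smul_eq_mul]
  ring

lemma aeval_X_sub_C_pow_mul_pow (a : K) (g : K → K) (s : ℕ) :
    aeval seqShift ((X - C a) ^ s) (fun n : ℕ => g n * a ^ n) =
      fun n : ℕ => (fwdDiff 1)^[s] g n * a ^ (n + s) := by
  induction s with
  | zero => simp
  | succ s ih =>
    ext n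
    rw [pow_succ', map_mul, Module.End.mul_apply, ih, Function.iterate_succ_apply']
    simp only [map_sub, aeval_X, aeval_C, LinearMap.sub_apply, Module.algebraMap_end_apply,
      Pi.sub_apply, Pi.smul_apply, seqShift, LinearMap.funLeft_apply, fwdDiff, smul_eq_mul,
      Nat.succ_eq_add_one]
    push_cast
    ring

lemma aeval_X_sub_C_pow_expPoly_eq_zero {Q : K[X]} {s : ℕ} (hQ : Q.natDegree < s) (a : K) :
    aeval seqShift ((X - C a) ^ s) (expPoly a Q) = 0 := by
  have h := aeval_X_sub_C_pow_mul_pow a (fun x => Q.eval x) s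
  rw [Polynomial.fwdDiff_iter_eq_zero_of_degree_lt hQ] at h
  exact h.trans (funext fun n => by simp)

lemma aeval_expPoly_eq_zero_of_dvd {p Q : K[X]} {a : K} {s : ℕ} (hp : (X - C a) ^ s ∣ p)
    (hQ : Q.natDegree < s) : aeval seqShift p (expPoly a Q) = 0 := by
  obtain ⟨r, rfl⟩ := hp
  rw [mul_comm, map_mul, Module.End.mul_apply, aeval_X_sub_C_pow_expPoly_eq_zero hQ,
    map_zero]

lemma aeval_seqShift_geom (p : K[X]) (a : K) :
    aeval seqShift p (fun n => a ^ n) = p.eval a • fun n => a ^ n := by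
  refine Module.End.aeval_apply_of_hasEigenvector ⟨?_, fun h => by simpa using congrFun h 0⟩
  rw [Module.End.mem_eigenspace_iff]
  ext n
  simp [seqShift, pow_succ']

lemma aeval_X_sub_C_pow_natDegree_expPoly (a : K) (Q : K[X]) :
    aeval seqShift ((X - C a) ^ Q.natDegree) (expPoly a Q) =
      (Q.leadingCoeff * Q.natDegree.factorial * a ^ Q.natDegree) • fun n => a ^ n := by
  have h := aeval_X_sub_C_pow_mul_pow a (fun x => Q.eval x) Q.natDegree
  rw [Polynomial.fwdDiff_iter_degree_eq_factorial] at h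
  refine h.trans (funext fun n => ?_)
  simp only [Pi.smul_apply, Pi.natCast_apply, smul_eq_mul, pow_add]
  ring

theorem eq_zero_of_aeval_seqShift_eq_zero {p : K[X]} (hp : p.Monic) {u : ℕ → K}
    (h : aeval seqShift p u = 0) (hu : ∀ n < p.natDegree, u n = 0) : u = 0 := by
  suffices ∀ n, u n = 0 from funext this
  intro n
  induction n using Nat.strong_induction_on with
  | _ n ih =>
    rcases lt_or_ge n p.natDegree with hn | hn
    · exact hu n hn
    obtain ⟨m, rfl⟩ := Nat.exists_eq_add_of_le' hn
    have hm := congrFun h m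
    rw [aeval_seqShift_apply, sum_range_succ, hp.coeff_natDegree, one_mul,
      sum_eq_zero fun t ht => by rw [ih (m + t) (by simp at ht; omega), mul_zero], zero_add] at hm
    exact hm

lemma monic_prod_X_sub_C_pow {ι : Type*} [Fintype ι] (lam : ι → K) (ν : ι → ℕ) :
    (∏ i, (X - C (lam i)) ^ ν i).Monic :=
  monic_prod_of_monic _ _ fun _ _ => (monic_X_sub_C _).pow _

lemma natDegree_prod_X_sub_C_pow {ι : Type*} [Fintype ι] (lam : ι → K) (ν : ι → ℕ) :
    (∏ i, (X - C (lam i)) ^ ν i).natDegree = ∑ i, ν i := by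
  rw [natDegree_prod_of_monic _ _ fun _ _ => (monic_X_sub_C _).pow _]
  simp

lemma aeval_prod_X_sub_C_pow_sum_expPoly {ι : Type*} [Fintype ι] (lam : ι → K) {Q : ι → K[X]}
    {ν : ι → ℕ} (hQ : ∀ i, Q i ∈ degreeLT K (ν i)) :
    aeval seqShift (∏ i, (X - C (lam i)) ^ ν i) (∑ i, expPoly (lam i) (Q i)) = 0 := by
  rw [map_sum]
  refine sum_eq_zero fun i _ => ?_
  rcases eq_or_ne (Q i) 0 with hQi | hQi
  · rw [hQi, map_zero, map_zero]
  · exact aeval_expPoly_eq_zero_of_dvd (dvd_prod_of_mem _ (mem_univ i))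
      ((natDegree_lt_iff_degree_lt hQi).2 (mem_degreeLT.1 (hQ i)))

variable [CharZero K]

theorem X_sub_C_pow_dvd_of_aeval_expPoly_eq_zero {c Q : K[X]} {a : K} (ha : a ≠ 0)
    (hQ : Q ≠ 0) (h : aeval seqShift c (expPoly a Q) = 0) :
    (X - C a) ^ (Q.natDegree + 1) ∣ c := by
  rcases eq_or_ne c 0 with rfl | hc
  · exact dvd_zero _
  obtain ⟨e, hce, he⟩ := exists_eq_pow_rootMultiplicity_mul_and_not_dvd c hc a
  refine (pow_dvd_pow _ ?_).trans (pow_rootMultiplicity_dvd c a)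
  set s := rootMultiplicity a c
  by_contra! hs
  -- `(X - a) ^ (deg Q - s) * c = e * (X - a) ^ deg Q` sends `expPoly a Q` to a nonzero multiple
  -- of the geometric sequence, since `e(a) ≠ 0`.
  have hkill : aeval seqShift (e * (X - C a) ^ Q.natDegree) (expPoly a Q) = 0 := by
    rw [show e * (X - C a) ^ Q.natDegree = (X - C a) ^ (Q.natDegree - s) * c by
      rw [hce, ← mul_assoc, ← pow_add, Nat.sub_add_cancel (by omega), mul_comm],
      map_mul, Module.End.mul_apply, h, map_zero]
  rw [map_mul, Module.End.mul_apply, aeval_X_sub_C_pow_natDegree_expPoly, map_smul,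
    aeval_seqShift_geom, smul_smul] at hkill
  have h0 := congrFun hkill 0
  simp only [Pi.smul_apply, pow_zero, smul_eq_mul, mul_one, Pi.zero_apply] at h0
  have hea : e.eval a ≠ 0 := fun hea => he (dvd_iff_isRoot.2 hea)
  simp [hea, ha, hQ, Nat.factorial_ne_zero] at h0

theorem X_sub_C_pow_dvd_of_aeval_sum_expPoly_eq_zero {ι : Type*} [Fintype ι] {lam : ι → K}
    (hlam : Function.Injective lam) {Q : ι → K[X]} {c : K[X]}
    (h : aeval seqShift c (∑ i, expPoly (lam i) (Q i)) = 0) {j : ι} (hj : lam j ≠ 0)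
    (hQj : Q j ≠ 0) : (X - C (lam j)) ^ ((Q j).natDegree + 1) ∣ c := by
  classical
  set R := ∏ i ∈ univ.erase j, (X - C (lam i)) ^ ((Q i).natDegree + 1)
  have hRsum : aeval seqShift R (∑ i, expPoly (lam i) (Q i)) =
      aeval seqShift R (expPoly (lam j) (Q j)) := by
    refine (map_sum _ _ _).trans (sum_eq_single j (fun i _ hi => ?_) (by simp))
    exact aeval_expPoly_eq_zero_of_dvd
      (dvd_prod_of_mem (fun i => (X - C (lam i)) ^ ((Q i).natDegree + 1))
        (mem_erase.2 ⟨hi, mem_univ i⟩)) (Nat.lt_succ_self _)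
  have hcop : IsCoprime ((X - C (lam j)) ^ ((Q j).natDegree + 1)) R :=
    IsCoprime.prod_right fun i hi =>
      (pairwise_coprime_X_sub_C hlam (ne_of_mem_erase hi).symm).pow
  refine hcop.dvd_of_dvd_mul_right (X_sub_C_pow_dvd_of_aeval_expPoly_eq_zero hj hQj ?_)
  rw [map_mul, Module.End.mul_apply, ← hRsum, ← Module.End.mul_apply, ← map_mul, mul_comm,
    map_mul, Module.End.mul_apply, h, map_zero]

theorem eq_zero_of_sum_expPoly_eq_zero {ι : Type*} [Fintype ι] {lam : ι → K}
    (hlam : Function.Injective lam) {Q : ι → K[X]} (h : ∑ i, expPoly (lam i) (Q i) = 0) {j : ι}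
    (hj : lam j ≠ 0) : Q j = 0 := by
  by_contra hQj
  have hdvd := X_sub_C_pow_dvd_of_aeval_sum_expPoly_eq_zero (c := 1) hlam
    (by rw [h, map_zero]) hj hQj
  simpa using natDegree_le_of_dvd hdvd one_ne_zero

theorem eq_zero_of_forall_lt_sum_expPoly_eq_zero {ι : Type*} [Fintype ι] {lam : ι → K}
    (hlam : Function.Injective lam) {Q : ι → K[X]} {ν : ι → ℕ} (hQ : ∀ i, Q i ∈ degreeLT K (ν i))
    {M : ℕ} (hM : ∑ i, ν i ≤ M) (h : ∀ n < M, (∑ i, expPoly (lam i) (Q i)) n = 0) {j : ι}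
    (hj : lam j ≠ 0) : Q j = 0 := by
  refine eq_zero_of_sum_expPoly_eq_zero hlam ?_ hj
  refine eq_zero_of_aeval_seqShift_eq_zero (monic_prod_X_sub_C_pow lam ν)
    (aeval_prod_X_sub_C_pow_sum_expPoly lam hQ) fun n hn => h n ?_
  rw [natDegree_prod_X_sub_C_pow] at hn
  omega

theorem linearIndependent_lagged {ι : Type*} [Fintype ι] {lam : ι → K}
    (hlam : Function.Injective lam) (hne : ∀ i, lam i ≠ 0) {P : ι → K[X]} (hP : ∀ i, P i ≠ 0)
    {f : ℕ → K} (hf : f = ∑ i, expPoly (lam i) (P i)) {L : ℕ}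
    (hL : ∑ i, ((P i).natDegree + 1) ≤ L) :
    LinearIndependent K
      (fun i : Fin (∑ i, ((P i).natDegree + 1)) => fun n : Fin L => f (i + n)) := by
  set d := ∑ i, ((P i).natDegree + 1)
  set Pf := ∏ i, (X - C (lam i)) ^ ((P i).natDegree + 1)
  have hPf : aeval seqShift Pf f = 0 := by
    rw [hf]
    exact aeval_prod_X_sub_C_pow_sum_expPoly lam fun i =>
      mem_degreeLT.2 (degree_le_natDegree.trans_lt (by exact_mod_cast Nat.lt_succ_self _))
  rw [Fintype.linearIndependent_iff]
  intro c hc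
  set p : K[X] := ∑ i : Fin d, c i • X ^ (i : ℕ)
  have hp : aeval seqShift p f = 0 := by
    refine eq_zero_of_aeval_seqShift_eq_zero (monic_prod_X_sub_C_pow lam _) (p := Pf) ?_
      fun n hn => ?_
    · rw [← Module.End.mul_apply, ← map_mul, mul_comm, map_mul, Module.End.mul_apply, hPf,
        map_zero]
    · rw [natDegree_prod_X_sub_C_pow] at hn
      simpa [p, seqShift_pow_apply, add_comm] using congrFun hc ⟨n, by omega⟩
  have hdvd : Pf ∣ p :=
    prod_dvd_of_coprime (fun i _ j _ hij => (pairwise_coprime_X_sub_C hlam hij).pow) fun i _ =>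
      X_sub_C_pow_dvd_of_aeval_sum_expPoly_eq_zero hlam (hf ▸ hp) (hne i) (hP i)
  have hp0 : p = 0 := by
    refine eq_zero_of_dvd_of_degree_lt hdvd ?_
    have hpd : p ∈ degreeLT K d := Submodule.sum_mem _ fun i _ =>
      Submodule.smul_mem _ _ (mem_degreeLT.2 (by simp))
    rwa [degree_eq_natDegree (monic_prod_X_sub_C_pow lam _).ne_zero, natDegree_prod_X_sub_C_pow,
      ← mem_degreeLT]
  have hmon : LinearIndependent K fun i : Fin d => (X : K[X]) ^ (i : ℕ) := by
    simpa [coe_basisMonomials, X_pow_eq_monomial, Function.comp_def] using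
      (basisMonomials K).linearIndependent.comp _ Fin.val_injective
  exact Fintype.linearIndependent_iff.1 hmon c hp0

noncomputable def descPochhammerSeq (R : Type*) [Ring R] [Nontrivial R] [NoZeroDivisors R] :
    Polynomial.Sequence R where
  elems' := descPochhammer R
  degree_eq' n := by
    rw [degree_eq_natDegree (monic_descPochhammer R n).ne_zero, descPochhammer_natDegree]

@[simp] lemma descPochhammerSeq_apply (R : Type*) [Ring R] [Nontrivial R] [NoZeroDivisors R]
    (n : ℕ) : descPochhammerSeq R n = descPochhammer R n :=
  rfl

end ExpPolySeq

open ExpPolySeq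

lemma window_expPoly_descPochhammer (L k : ℕ) (a : ℂ) :
    window ℂ L (expPoly a (descPochhammer ℂ k)) = a ^ k • ellVec L k a := by
  ext i
  simp only [window, LinearMap.funLeft_apply, expPoly_apply, descPochhammer_eval_eq_descFactorial,
    Pi.smul_apply, ellVec, iterate_derivative_X_pow_eq_smul, eval_smul, eval_pow, eval_X,
    smul_eq_mul]
  rcases le_or_gt k i with hki | hki
  · obtain ⟨r, hr⟩ := Nat.exists_eq_add_of_le hki
    rw [hr, Nat.add_sub_cancel_left, pow_add]
    ring
  · simp [Nat.descFactorial_eq_zero_iff_lt.2 hki]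

lemma window_expPoly_mem_span_ellVec (L : ℕ) (a : ℂ) {ν : ℕ} {Q : ℂ[X]}
    (hQ : Q ∈ degreeLT ℂ ν) :
    window ℂ L (expPoly a Q) ∈ Submodule.span ℂ (Set.range fun k : Fin ν => ellVec L k a) := by
  rw [← (descPochhammerSeq ℂ).span_degreeLT fun i _ => by
    simp [(monic_descPochhammer ℂ i).leadingCoeff]] at hQ
  have hmap := Submodule.mem_map_of_mem (f := (window ℂ L).comp (expPoly a)) hQ
  rw [Submodule.map_span] at hmap
  refine Submodule.span_le.2 ?_ hmap
  rintro _ ⟨_, ⟨k, hk, rfl⟩, rfl⟩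
  rw [LinearMap.comp_apply, descPochhammerSeq_apply, window_expPoly_descPochhammer]
  exact Submodule.smul_mem _ _ (Submodule.subset_span ⟨⟨k, hk⟩, rfl⟩)

theorem linearIndependent_ellVec {ι : Type*} [Fintype ι] {lam : ι → ℂ}
    (hlam : Function.Injective lam) (hne : ∀ i, lam i ≠ 0) (ν : ι → ℕ) {L : ℕ}
    (hL : ∑ i, ν i ≤ L) :
    LinearIndependent ℂ (fun p : Σ i, Fin (ν i) => ellVec L p.2 (lam p.1)) := by
  rw [Fintype.linearIndependent_iff]
  intro g hg
  set Q : ι → ℂ[X] := fun i =>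
    ∑ k : Fin (ν i), (g ⟨i, k⟩ * (lam i ^ (k : ℕ))⁻¹) • descPochhammer ℂ k
  have hQ : ∀ i, Q i ∈ degreeLT ℂ (ν i) := fun i => Submodule.sum_mem _ fun k _ =>
    Submodule.smul_mem _ _ (mem_degreeLT.2 (by
      rw [← descPochhammerSeq_apply, Sequence.degree_eq]
      exact_mod_cast k.2))
  have hsum : window ℂ L (∑ i, expPoly (lam i) (Q i)) = 0 := by
    rw [← hg, Fintype.sum_sigma]
    simp [Q, map_sum, map_smul, window_expPoly_descPochhammer, smul_smul, hne]
  intro ⟨i, k⟩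
  have hQi := eq_zero_of_forall_lt_sum_expPoly_eq_zero hlam hQ hL
    (fun n hn => congrFun hsum ⟨n, hn⟩) (hne i)
  have hdesc := (descPochhammerSeq ℂ).linearIndependent.comp _ (Fin.val_injective (n := ν i))
  simpa [hne] using Fintype.linearIndependent_iff.1 hdesc _ hQi k

theorem trajSpace_le_span_ellVec {ι : Type*} [Fintype ι] (lam : ι → ℂ) (P : ι → ℂ[X])
    {f : ℕ → ℂ} (hf : f = ∑ i, expPoly (lam i) (P i)) (N L : ℕ) :
    trajSpace f N L ≤
      Submodule.span ℂ (Set.range fun p : Σ i, Fin ((P i).natDegree + 1) =>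
        ellVec L p.2 (lam p.1)) := by
  refine Submodule.span_le.2 ?_
  rintro _ ⟨s, -, rfl⟩
  have hlag : (fun n : Fin L => f (s + n)) =
      ∑ i, window ℂ L (expPoly (lam i) (lam i ^ s • taylor (s : ℂ) (P i))) := by
    ext n
    simp only [hf, Finset.sum_apply, window, LinearMap.funLeft_apply, expPoly_add_apply]
  rw [SetLike.mem_coe, hlag]
  refine Submodule.sum_mem _ fun i _ => ?_
  have hdeg : lam i ^ s • taylor (s : ℂ) (P i) ∈ degreeLT ℂ ((P i).natDegree + 1) := by
    refine mem_degreeLT.2 ((degree_smul_le _ _).trans_lt ?_)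
    rw [degree_taylor]
    exact degree_le_natDegree.trans_lt (by exact_mod_cast Nat.lt_succ_self _)
  refine Submodule.span_mono ?_ (window_expPoly_mem_span_ellVec L (lam i) hdeg)
  rintro _ ⟨k, rfl⟩
  exact ⟨⟨i, k⟩, rfl⟩

theorem ell_vectors_basis_of_trajectory_space_general
    (f : ℕ → ℂ) (m : ℕ) (lam : Fin m → ℂ) (P : Fin m → Polynomial ℂ)
    (hinj : Function.Injective lam) (hne : ∀ k, lam k ≠ 0) (hP : ∀ k, P k ≠ 0)
    (hf : ∀ n : ℕ, f n = ∑ k, (P k).eval (n : ℂ) * lam k ^ n)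
    (d : ℕ) (hd : d = ∑ k, ((P k).natDegree + 1))
    (N L : ℕ) (hdL : d < L) (hLN : L + d ≤ N + 1) :
    LinearIndependent ℂ
      (fun p : (Σ j : Fin m, Fin ((P j).natDegree + 1)) => ellVec L (p.2 : ℕ) (lam p.1)) ∧
    Submodule.span ℂ
      (Set.range (fun p : (Σ j : Fin m, Fin ((P j).natDegree + 1)) =>
        ellVec L (p.2 : ℕ) (lam p.1))) = trajSpace f N L := by
  subst hd
  have hf' : f = ∑ k, expPoly (lam k) (P k) := funext fun n => by simp [hf]
  have hell := linearIndependent_ellVec hinj hne (fun k => (P k).natDegree + 1) hdL.le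
  have hlag := linearIndependent_lagged hinj hne hP hf' hdL.le
  have hlagSpan : Submodule.span ℂ (Set.range fun s : Fin (∑ k, ((P k).natDegree + 1)) =>
      fun n : Fin L => f (s + n)) ≤ trajSpace f N L := Submodule.span_le.2 <| by
    rintro _ ⟨s, rfl⟩
    exact Submodule.subset_span ⟨s, by have := s.2; omega, rfl⟩
  refine ⟨hell, (Submodule.eq_of_le_of_finrank_le (trajSpace_le_span_ellVec lam P hf' N L) ?_).symm⟩
  calc Module.finrank ℂ (Submodule.span ℂ (Set.range fun p : Σ k, Fin ((P k).natDegree + 1) =>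
        ellVec L p.2 (lam p.1)))
      = Module.finrank ℂ (Submodule.span ℂ (Set.range fun s : Fin (∑ k, ((P k).natDegree + 1)) =>
          fun n : Fin L => f (s + n))) := by
        simp [finrank_span_eq_card hell, finrank_span_eq_card hlag]
    _ ≤ Module.finrank ℂ (trajSpace f N L) := Submodule.finrank_mono hlagSpan

/-- For a series of difference dimension `d` with signal roots `λ_j` of
multiplicities `ν_j = deg P_j + 1`, and `d < L ≤ N - d + 1`, the `d` vectors
`ℓ^k_L(λ_j)`, `0 ≤ k < ν_j`, form a basis of the trajectory space. -/
theorem ell_vectors_basis_of_trajectory_space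
    (f : ℕ → ℂ) (m : ℕ) (lam : Fin m → ℂ) (P : Fin m → Polynomial ℂ)
    (hinj : Function.Injective lam) (hne : ∀ k, lam k ≠ 0) (hP : ∀ k, P k ≠ 0)
    (hf : ∀ n : ℕ, f n = ∑ k, (P k).eval (n : ℂ) * lam k ^ n)
    (d : ℕ) (hd : d = ∑ k, ((P k).natDegree + 1))
    (N L : ℕ) (hdN : 2 * d ≤ N) (hdL : d < L) (hLN : L + d ≤ N + 1) :
    LinearIndependent ℂ
      (fun p : (Σ j : Fin m, Fin ((P j).natDegree + 1)) => ellVec L (p.2 : ℕ) (lam p.1)) ∧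
    Submodule.span ℂ
      (Set.range (fun p : (Σ j : Fin m, Fin ((P j).natDegree + 1)) =>
        ellVec L (p.2 : ℕ) (lam p.1))) = trajSpace f N L :=
  ell_vectors_basis_of_trajectory_space_general f m lam P hinj hne hP hf d hd N L hdL hLN
end

section
/- If a finite time series F_N satisfies an LRF of order d_0 ≤ min(L−1, N−L+1) (i.e., f_{n+d_0} = Σ_{k=0}^{d_0−1} a_k f_{n+k} for 0 ≤ n ≤ N−d_0−1), then F_N is L-continuable: there exists unique α ∈ ℂ with 𝔏^{(L)}(f_0,…,f_{N-1}) = 𝔏^{(L)}(f_0,…,f_{N-1},α), and the continuation is achieved by the same LRF. -/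
/-!
Write `x_i = (f_i, …, f_{i+L-1})` for the lagged vectors, so that the trajectory space of `F_N` is
spanned by `x_0, …, x_{N-L}`, and extending the series by `α` adds exactly the vector `x_{N+1-L}`,
whose last entry is `α`. The LRF says that every lagged vector of `F_N` is annihilated by the
functional `v ↦ v_{L-1} - ∑ a_k v_{L-1-d₀+k}`; as the new vector has to lie in the old trajectory
space, this pins `α` down to `∑ a_k f_{N-d₀+k}`. Conversely, with this `α` the extended series still
satisfies the LRF, so `x_{N+1-L} = ∑ a_k x_{N+1-L-d₀+k}` is a combination of old lagged vectors
(this is where `d₀ + L ≤ N + 1` enters).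
-/

open Finset

open Function

def lagVec (f : ℕ → ℂ) (L i : ℕ) : Fin L → ℂ := fun j => f (i + j)

def SatisfiesLRF (f : ℕ → ℂ) (N d₀ : ℕ) (a : ℕ → ℂ) : Prop :=
  ∀ n, n + d₀ < N → f (n + d₀) = ∑ k ∈ range d₀, a k * f (n + k)

noncomputable def lrfResidual {L d₀ : ℕ} (a : ℕ → ℂ) (hd₀L : d₀ < L) : (Fin L → ℂ) →ₗ[ℂ] ℂ :=
  LinearMap.proj ⟨L - 1, by omega⟩ -
    ∑ k : Fin d₀, a k • LinearMap.proj ⟨L - 1 - d₀ + k, by omega⟩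

section TrajSpace

variable {f g : ℕ → ℂ} {N L : ℕ}

lemma lagVec_mem_trajSpace {i : ℕ} (h : i + L ≤ N) : lagVec f L i ∈ trajSpace f N L :=
  Submodule.subset_span ⟨i, h, rfl⟩

lemma trajSpace_le_iff {p : Submodule ℂ (Fin L → ℂ)} :
    trajSpace f N L ≤ p ↔ ∀ i, i + L ≤ N → lagVec f L i ∈ p := by
  rw [trajSpace, Submodule.span_le]
  constructor
  · exact fun h i hi => h ⟨i, hi, rfl⟩
  · rintro h _ ⟨i, hi, rfl⟩
    exact h i hi

lemma trajSpace_mono {M : ℕ} (h : N ≤ M) : trajSpace f N L ≤ trajSpace f M L :=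
  trajSpace_le_iff.2 fun _ hi => lagVec_mem_trajSpace (hi.trans h)

lemma trajSpace_le_of_eqOn (h : ∀ n < N, f n = g n) : trajSpace f N L ≤ trajSpace g N L :=
  trajSpace_le_iff.2 fun i hi => by
    rw [show lagVec f L i = lagVec g L i from funext fun j => h _ (by omega)]
    exact lagVec_mem_trajSpace hi

lemma trajSpace_update_self (α : ℂ) : trajSpace (update f N α) N L = trajSpace f N L :=
  le_antisymm (trajSpace_le_of_eqOn fun _ hn => update_of_ne hn.ne _ _)
    (trajSpace_le_of_eqOn fun _ hn => (update_of_ne hn.ne _ _).symm)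

lemma trajSpace_succ_eq_iff (h : L ≤ N + 1) :
    trajSpace f (N + 1) L = trajSpace f N L ↔ lagVec f L (N + 1 - L) ∈ trajSpace f N L := by
  constructor
  · intro heq
    rw [← heq]
    exact lagVec_mem_trajSpace (by omega)
  · intro hmem
    refine le_antisymm (trajSpace_le_iff.2 fun i hi => ?_) (trajSpace_mono N.le_succ)
    rcases (by omega : i + L ≤ N ∨ i = N + 1 - L) with hi | rfl
    · exact lagVec_mem_trajSpace hi
    · exact hmem

lemma trajSpace_update_eq_iff (α : ℂ) (h : L ≤ N + 1) :
    trajSpace (update f N α) (N + 1) L = trajSpace f N L ↔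
      lagVec (update f N α) L (N + 1 - L) ∈ trajSpace f N L := by
  rw [← trajSpace_update_self (f := f) (N := N) α]
  exact trajSpace_succ_eq_iff h

end TrajSpace

section LRF

variable {f : ℕ → ℂ} {N L d₀ : ℕ} {a : ℕ → ℂ}

lemma SatisfiesLRF.update_succ (hf : SatisfiesLRF f N d₀ a) (hd₀N : d₀ ≤ N) :
    SatisfiesLRF (update f N (∑ k ∈ range d₀, a k * f (N - d₀ + k))) (N + 1) d₀ a := by
  intro n hn
  have hsum : ∑ k ∈ range d₀, a k * update f N (∑ k ∈ range d₀, a k * f (N - d₀ + k)) (n + k) =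
      ∑ k ∈ range d₀, a k * f (n + k) :=
    sum_congr rfl fun k hk => by rw [update_of_ne (by rw [mem_range] at hk; omega)]
  rw [hsum]
  rcases (by omega : n + d₀ < N ∨ n = N - d₀) with hn | rfl
  · rw [update_of_ne hn.ne, hf n hn]
  · rw [Nat.sub_add_cancel hd₀N, update_self]

lemma SatisfiesLRF.lagVec_add_order (hf : SatisfiesLRF f N d₀ a) {i : ℕ}
    (h : i + d₀ + L ≤ N) : lagVec f L (i + d₀) = ∑ k ∈ range d₀, a k • lagVec f L (i + k) := by
  funext j
  simp only [lagVec, Finset.sum_apply, Pi.smul_apply, smul_eq_mul]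
  rw [show i + d₀ + j = i + j + d₀ by omega, hf _ (by omega)]
  exact sum_congr rfl fun k _ => by rw [add_right_comm]

lemma SatisfiesLRF.lagVec_mem_trajSpace (hf : SatisfiesLRF f (N + 1) d₀ a) {i : ℕ}
    (h : i + d₀ + L = N + 1) : lagVec f L (i + d₀) ∈ trajSpace f N L := by
  rw [hf.lagVec_add_order h.le]
  exact sum_mem fun k hk =>
    Submodule.smul_mem _ _ (_root_.lagVec_mem_trajSpace (by rw [mem_range] at hk; omega))

lemma lrfResidual_lagVec (hd₀L : d₀ < L) (i : ℕ) :
    lrfResidual a hd₀L (lagVec f L i) =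
      f (i + (L - 1)) - ∑ k ∈ range d₀, a k * f (i + (L - 1 - d₀ + k)) := by
  simp [lrfResidual, lagVec, Fin.sum_univ_eq_sum_range (fun k => a k * f (i + (L - 1 - d₀ + k)))]

lemma SatisfiesLRF.trajSpace_le_ker (hf : SatisfiesLRF f N d₀ a) (hd₀L : d₀ < L) :
    trajSpace f N L ≤ LinearMap.ker (lrfResidual a hd₀L) :=
  trajSpace_le_iff.2 fun i hi => by
    rw [LinearMap.mem_ker, lrfResidual_lagVec, sub_eq_zero,
      show i + (L - 1) = i + (L - 1 - d₀) + d₀ by omega, hf _ (by omega)]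
    exact sum_congr rfl fun k _ => by rw [add_assoc]

lemma SatisfiesLRF.trajSpace_update_eq (hf : SatisfiesLRF f N d₀ a) (hL : 0 < L)
    (hd₀K : d₀ + L ≤ N + 1) :
    trajSpace (update f N (∑ k ∈ range d₀, a k * f (N - d₀ + k))) (N + 1) L = trajSpace f N L := by
  rw [trajSpace_update_eq_iff _ (by omega), ← trajSpace_update_self (f := f) (N := N),
    show N + 1 - L = N + 1 - L - d₀ + d₀ by omega]
  exact (hf.update_succ (by omega)).lagVec_mem_trajSpace (by omega)

lemma SatisfiesLRF.eq_of_trajSpace_update_eq (hf : SatisfiesLRF f N d₀ a) (hd₀L : d₀ < L)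
    (hLN : L ≤ N + 1) {α : ℂ} (hα : trajSpace (update f N α) (N + 1) L = trajSpace f N L) :
    α = ∑ k ∈ range d₀, a k * f (N - d₀ + k) := by
  rw [trajSpace_update_eq_iff α hLN] at hα
  have hres := hf.trajSpace_le_ker hd₀L hα
  have hprev : ∀ k ∈ range d₀,
      a k * update f N α (N + 1 - L + (L - 1 - d₀ + k)) = a k * f (N - d₀ + k) := fun k hk => by
    rw [mem_range] at hk
    rw [show N + 1 - L + (L - 1 - d₀ + k) = N - d₀ + k by omega, update_of_ne (by omega)]
  rwa [LinearMap.mem_ker, lrfResidual_lagVec, sub_eq_zero, show N + 1 - L + (L - 1) = N by omega,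
    update_self, sum_congr rfl hprev] at hres

end LRF

theorem lrf_implies_L_continuable_general
    (f : ℕ → ℂ) (N L d₀ : ℕ)
    (hd₀L : d₀ < L) (hd₀K : d₀ + L ≤ N + 1)
    (a : ℕ → ℂ)
    (hlrf : ∀ n : ℕ, n + d₀ < N → f (n + d₀) = ∑ k ∈ Finset.range d₀, a k * f (n + k)) :
    (∃! α : ℂ, trajSpace (Function.update f N α) (N + 1) L = trajSpace f N L) ∧
    trajSpace
      (Function.update f N (∑ k ∈ Finset.range d₀, a k * f (N - d₀ + k))) (N + 1) L =
      trajSpace f N L := by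
  have hf : SatisfiesLRF f N d₀ a := hlrf
  have hα₀ := hf.trajSpace_update_eq (by omega) hd₀K
  exact ⟨⟨_, hα₀, fun _ hα => hf.eq_of_trajSpace_update_eq hd₀L (by omega) hα⟩, hα₀⟩

/-- If a finite series of length `N` satisfies an LRF of order
`d₀ ≤ min (L-1) (N-L+1)`, then it is (forward) `L`-continuable, and the
continuation is achieved by the same LRF. -/
theorem lrf_implies_L_continuable
    (f : ℕ → ℂ) (N L d₀ : ℕ) (hL : 1 < L) (hLN : L < N)
    (hd₀L : d₀ < L) (hd₀K : d₀ + L ≤ N + 1)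
    (a : ℕ → ℂ)
    (hlrf : ∀ n : ℕ, n + d₀ < N → f (n + d₀) = ∑ k ∈ Finset.range d₀, a k * f (n + k)) :
    (∃! α : ℂ, trajSpace (Function.update f N α) (N + 1) L = trajSpace f N L) ∧
    trajSpace
      (Function.update f N (∑ k ∈ Finset.range d₀, a k * f (N - d₀ + k))) (N + 1) L =
      trajSpace f N L :=
  lrf_implies_L_continuable_general f N L d₀ hd₀L hd₀K a hlrf
end

section
/- Let F_N^{(1)} be the constant series f_n ≡ c ≠ 0 and L ≤ N/2. A nonzero time series F_N^{(2)} of finite difference dimension is left-separable from F_N^{(1)} if and only if f^{(2)}_n = Σ_{k=1}^{L-1} c_k exp(2πik n/L) for some constants c_k ∈ ℂ not all zero; equivalently, F^{(2)} is L-periodic with Σ_{n=0}^{L-1} f^{(2)}_n = 0. -/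
/-!
The trajectory space of the constant series is spanned by `(1, …, 1)`, so left-separability says
that every window sum `∑_{j<L} f₂ (i + j)` with `i + L ≤ N` vanishes. With `S` the shift, the
window sums are `W(S) f₂` for `W = 1 + X + ⋯ + X^(L-1)`, hence they satisfy the recurrence
`Q(S) = 0`, `Q = ∏ₖ (X - λₖ)^(deg Pₖ + 1)`, of `f₂`; its order is at most `N - L`, so they vanish
identically. Vanishing of all window sums means `f₂` is `L`-periodic with zero sum over a period,
and by Fourier inversion on `ZMod L` this means `f₂ = ∑_{0<k<L} cₖ exp(2πikn/L)`. Some `cₖ` is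
nonzero because `f₂ ≠ 0`: the operator `∏_{j≠k₀} (S - λⱼ)^(deg Pⱼ + 1)` kills every term of `f₂`
but the `k₀`-th, which it sends to `q(n) λ_{k₀}ⁿ` with `q ≠ 0`.
-/

open Polynomial Finset Real

noncomputable def hinner {L : ℕ} (u v : Fin L → ℂ) : ℂ :=
  ∑ i, (starRingEnd ℂ) (u i) * v i

section Shift

variable {R : Type*} [CommRing R]

noncomputable def shift : Module.End R (ℕ → R) := LinearMap.funLeft R R (· + 1)

lemma shift_pow_apply (j : ℕ) (f : ℕ → R) (n : ℕ) : (shift ^ j) f n = f (n + j) := by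
  induction j generalizing f with
  | zero => rfl
  | succ j ih => rw [pow_succ, Module.End.mul_apply, ih]; rfl

lemma aeval_shift_apply (Q : R[X]) (f : ℕ → R) (n : ℕ) :
    aeval shift Q f n = ∑ j ∈ range (Q.natDegree + 1), Q.coeff j * f (n + j) := by
  rw [aeval_eq_sum_range, LinearMap.sum_apply, Finset.sum_apply]
  simp only [LinearMap.smul_apply, Pi.smul_apply, shift_pow_apply, smul_eq_mul]

lemma aeval_shift_geom_sum_apply (L : ℕ) (f : ℕ → R) (n : ℕ) :
    aeval shift (∑ j ∈ range L, (X : R[X]) ^ j) f n = ∑ j ∈ range L, f (n + j) := by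
  simp only [map_sum, map_pow, aeval_X, LinearMap.sum_apply, Finset.sum_apply, shift_pow_apply]

lemma eq_zero_of_aeval_shift_eq_zero {Q : R[X]} (hQ : Q.Monic) {f : ℕ → R}
    (hf : aeval shift Q f = 0) (hinit : ∀ i < Q.natDegree, f i = 0) : f = 0 := by
  suffices ∀ n, f n = 0 from funext this
  intro n
  induction n using Nat.strong_induction_on with
  | _ n ih =>
    obtain hn | ⟨i, rfl⟩ : n < Q.natDegree ∨ ∃ i, n = i + Q.natDegree :=
      (lt_or_ge n Q.natDegree).imp_right fun h => ⟨n - Q.natDegree, by omega⟩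
    · exact hinit n hn
    have hrec := congrFun hf i
    have hlower : ∀ j ∈ range Q.natDegree, Q.coeff j * f (i + j) = 0 := fun j hj => by
      rw [ih (i + j) (by have := mem_range.mp hj; omega), mul_zero]
    rw [aeval_shift_apply, sum_range_succ, hQ.coeff_natDegree, one_mul, sum_eq_zero hlower] at hrec
    simpa using hrec

lemma sum_window_eq_zero_of_aeval_shift_eq_zero {Q : R[X]} (hQ : Q.Monic) {f : ℕ → R}
    (hf : aeval shift Q f = 0) (L : ℕ)
    (hinit : ∀ i < Q.natDegree, ∑ j ∈ range L, f (i + j) = 0) (n : ℕ) :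
    ∑ j ∈ range L, f (n + j) = 0 := by
  have hwin : aeval shift Q (aeval shift (∑ j ∈ range L, (X : R[X]) ^ j) f) = 0 := by
    rw [← Module.End.mul_apply, ← map_mul, mul_comm, map_mul, Module.End.mul_apply, hf, map_zero]
  have := eq_zero_of_aeval_shift_eq_zero hQ hwin fun i hi => by
    rw [aeval_shift_geom_sum_apply, hinit i hi]
  simpa only [aeval_shift_geom_sum_apply, Pi.zero_apply] using congrFun this n

end Shift

section ExpPoly

variable {R : Type*} [CommRing R]

noncomputable def expPoly (p : R[X]) (a : R) (n : ℕ) : R := p.eval (n : R) * a ^ n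

@[simp]
lemma expPoly_zero (a : R) : expPoly 0 a = 0 := by
  funext n; simp [expPoly]

lemma aeval_shift_X_sub_C_expPoly (p : R[X]) (a μ : R) :
    aeval shift (X - C μ) (expPoly p a) = expPoly (a • taylor 1 p - μ • p) a := by
  funext n
  simp only [shift, aeval_sub, aeval_X, aeval_C, LinearMap.sub_apply, Module.algebraMap_end_apply,
    Pi.sub_apply, LinearMap.funLeft_apply, expPoly, Nat.cast_add, Nat.cast_one, pow_succ,
    Pi.smul_apply, smul_eq_mul, eval_sub, eval_smul, taylor_eval]
  ring

lemma natDegree_taylor_sub_self_lt {p : R[X]} (r : R) (h : taylor r p - p ≠ 0) :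
    (taylor r p - p).natDegree < p.natDegree := by
  have hp : p ≠ 0 := by rintro rfl; simp at h
  have := degree_sub_lt_left (degree_taylor p r) ((taylor_eq_zero r p).not.mpr hp)
    (leadingCoeff_taylor r p)
  rw [degree_taylor] at this
  exact natDegree_lt_natDegree h this

lemma aeval_shift_X_sub_C_pow_expPoly {p : R[X]} {d : ℕ} (a : R) (hp : p.natDegree < d) :
    aeval shift ((X - C a) ^ d) (expPoly p a) = 0 := by
  induction d generalizing p with
  | zero => omega
  | succ d ih =>
    rw [pow_succ, map_mul, Module.End.mul_apply, aeval_shift_X_sub_C_expPoly, ← smul_sub]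
    by_cases h : taylor 1 p - p = 0
    · simp [h]
    · have := natDegree_taylor_sub_self_lt 1 h
      exact ih ((natDegree_smul_le _ _).trans_lt (by omega))

lemma aeval_shift_prod_expPoly {ι : Type*} [DecidableEq ι] {s : Finset ι} {k : ι} (hk : k ∈ s)
    (μ : ι → R) (e : ι → ℕ) {p : R[X]} (hp : p.natDegree < e k) :
    aeval shift (∏ j ∈ s, (X - C (μ j)) ^ e j) (expPoly p (μ k)) = 0 := by
  rw [← mul_prod_erase s _ hk, mul_comm, map_mul, Module.End.mul_apply,
    aeval_shift_X_sub_C_pow_expPoly _ hp, map_zero]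

lemma aeval_shift_prod_sum_expPoly {ι : Type*} [Fintype ι] [DecidableEq ι] (lam : ι → R)
    (P : ι → R[X]) :
    aeval shift (∏ k, (X - C (lam k)) ^ ((P k).natDegree + 1))
      (∑ k, expPoly (P k) (lam k)) = 0 := by
  rw [map_sum]
  exact sum_eq_zero fun k _ => aeval_shift_prod_expPoly (mem_univ k) _ _ (Nat.lt_succ_self _)

def expPolyStable (a : R) : Submonoid R[X] where
  carrier := {Q | ∀ p ≠ 0, ∃ q ≠ 0, aeval shift Q (expPoly p a) = expPoly q a}
  one_mem' p hp := ⟨p, hp, by simp⟩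
  mul_mem' {Q₁ Q₂} h₁ h₂ p hp := by
    obtain ⟨q₂, hq₂, e₂⟩ := h₂ p hp
    obtain ⟨q₁, hq₁, e₁⟩ := h₁ q₂ hq₂
    exact ⟨q₁, hq₁, by rw [map_mul, Module.End.mul_apply, e₂, e₁]⟩

lemma coeff_smul_taylor_sub_smul_natDegree (p : R[X]) (a μ : R) :
    (a • taylor 1 p - μ • p).coeff p.natDegree = (a - μ) * p.leadingCoeff := by
  rw [coeff_sub, coeff_smul, coeff_smul, coeff_taylor_natDegree, coeff_natDegree, smul_eq_mul,
    smul_eq_mul, sub_mul]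

lemma X_sub_C_mem_expPolyStable [IsDomain R] {a μ : R} (h : μ ≠ a) :
    X - C μ ∈ expPolyStable a := fun p hp =>
  ⟨_, fun hq => mul_ne_zero (sub_ne_zero.mpr h.symm) (leadingCoeff_ne_zero.mpr hp) <| by
    rw [← coeff_smul_taylor_sub_smul_natDegree, hq, coeff_zero],
    aeval_shift_X_sub_C_expPoly p a μ⟩

lemma expPoly_ne_zero [IsDomain R] [CharZero R] {p : R[X]} {a : R} (hp : p ≠ 0) (ha : a ≠ 0) :
    expPoly p a ≠ 0 := fun h => hp <| eq_zero_of_infinite_isRoot p <|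
  Set.infinite_of_injective_forall_mem Nat.cast_injective fun n => by
    simpa [expPoly, ha] using congrFun h n

lemma sum_expPoly_ne_zero [IsDomain R] [CharZero R] {ι : Type*} [Fintype ι] [DecidableEq ι]
    [Nonempty ι] {lam : ι → R} (hinj : Function.Injective lam) (hne : ∀ k, lam k ≠ 0)
    {P : ι → R[X]} (hP : ∀ k, P k ≠ 0) : ∑ k, expPoly (P k) (lam k) ≠ 0 := by
  obtain ⟨k₀⟩ := ‹Nonempty ι›
  set T := ∏ j ∈ univ.erase k₀, (X - C (lam j)) ^ ((P j).natDegree + 1)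
  obtain ⟨q, hq, hT⟩ : ∃ q ≠ 0, aeval shift T (expPoly (P k₀) (lam k₀)) = expPoly q (lam k₀) :=
    Submonoid.prod_mem _ (fun j hj => Submonoid.pow_mem _
      (X_sub_C_mem_expPolyStable (hinj.ne (ne_of_mem_erase hj))) _) _ (hP k₀)
  have hsum : aeval shift T (∑ k, expPoly (P k) (lam k)) = expPoly q (lam k₀) := by
    rw [map_sum, ← add_sum_erase _ _ (mem_univ k₀),
      sum_eq_zero fun k hk => aeval_shift_prod_expPoly hk _ _ (Nat.lt_succ_self _), add_zero, hT]
  intro h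
  rw [h, map_zero] at hsum
  exact expPoly_ne_zero hq (hne k₀) hsum.symm

end ExpPoly

section Orthogonality

variable {L : ℕ}

lemma hinner_eq_dotProduct (u v : Fin L → ℂ) : hinner u v = star u ⬝ᵥ v := rfl

lemma hinner_eq_zero_of_mem_span {A B : Set (Fin L → ℂ)} (h : ∀ u ∈ A, ∀ v ∈ B, hinner u v = 0)
    {u v : Fin L → ℂ} (hu : u ∈ Submodule.span ℂ A) (hv : v ∈ Submodule.span ℂ B) :
    hinner u v = 0 := by
  induction hu, hv using Submodule.span_induction₂ with
  | mem_mem x y hx hy => exact h x hx y hy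
  | zero_left | zero_right => simp [hinner_eq_dotProduct]
  | add_left | add_right | smul_left | smul_right => simp_all [hinner_eq_dotProduct, star_smul]

lemma hinner_const_window (c : ℂ) (f : ℕ → ℂ) (i : ℕ) :
    hinner (fun _ : Fin L => c) (fun j : Fin L => f (i + j)) =
      star c * ∑ j ∈ range L, f (i + j) := by
  rw [hinner, ← Fin.sum_univ_eq_sum_range (fun j => f (i + j)), mul_sum]
  rfl

lemma orthogonal_trajSpace_const_iff {N : ℕ} {c : ℂ} (hc : c ≠ 0) {f₁ : ℕ → ℂ}
    (hf₁ : ∀ n, f₁ n = c) (f₂ : ℕ → ℂ) (hLN : L ≤ N) :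
    (∀ u ∈ trajSpace f₁ N L, ∀ v ∈ trajSpace f₂ N L, hinner u v = 0) ↔
      ∀ i, i + L ≤ N → ∑ j ∈ range L, f₂ (i + j) = 0 := by
  have hwin : ∀ i, (fun j : Fin L => f₁ (i + j)) = fun _ => c := fun i => funext fun _ => hf₁ _
  constructor
  · intro h i hi
    have := h _ (Submodule.subset_span ⟨0, by omega, (hwin 0).symm⟩) _
      (Submodule.subset_span ⟨i, hi, rfl⟩)
    rw [hinner_const_window] at this
    exact (mul_eq_zero.mp this).resolve_left (star_ne_zero.mpr hc)
  · intro h u hu v hv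
    refine hinner_eq_zero_of_mem_span ?_ hu hv
    rintro _ ⟨i, -, rfl⟩ _ ⟨i', hi', rfl⟩
    rw [hwin, hinner_const_window, h i' hi', mul_zero]

end Orthogonality

lemma sum_window_eq_zero_iff {M : Type*} [AddCommGroup M] {f : ℕ → M} {L : ℕ} :
    (∀ n, ∑ j ∈ range L, f (n + j) = 0) ↔ Function.Periodic f L ∧ ∑ j ∈ range L, f j = 0 := by
  have slide : ∀ n, ∑ j ∈ range L, f (n + 1 + j) + f n = ∑ j ∈ range L, f (n + j) + f (n + L) := by
    intro n
    rw [← sum_range_succ (fun j => f (n + j)), sum_range_succ', add_zero]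
    simp only [add_right_comm n 1, add_assoc]
  constructor
  · intro h
    refine ⟨fun n => ?_, by simpa using h 0⟩
    simpa [h] using (slide n).symm
  · rintro ⟨hper, hsum⟩ n
    induction n with
    | zero => simpa using hsum
    | succ n ih => simpa [ih, hper n] using slide n

section Fourier

open ZMod

variable {L : ℕ}

lemma sum_zmod_eq_sum_range [NeZero L] {M : Type*} [AddCommMonoid M] (F : ZMod L → M) :
    ∑ j, F j = ∑ k ∈ range L, F k :=
  sum_nbij' ZMod.val (fun k => k) (fun j _ => mem_range.mpr (ZMod.val_lt j))
    (fun _ _ => mem_univ _) (fun j _ => natCast_zmod_val j)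
    (fun k hk => ZMod.val_cast_of_lt (mem_range.mp hk)) (fun j _ => by rw [natCast_zmod_val])

lemma stdAddChar_natCast_mul_natCast [NeZero L] (k n : ℕ) :
    stdAddChar ((k : ZMod L) * (n : ZMod L)) = Complex.exp (2 * π * Complex.I * k / L) ^ n := by
  rw [← Nat.cast_mul, stdAddChar_apply, toCircle_natCast, ← Complex.exp_nat_mul]
  push_cast
  ring_nf

lemma Function.Periodic.val_natCast {M : Type*} {f : ℕ → M} (hf : Function.Periodic f L) (n : ℕ) :
    f (n : ZMod L).val = f n := by
  rw [ZMod.val_natCast, hf.map_mod_nat]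

lemma Function.Periodic.eq_sum_dft [NeZero L] {f : ℕ → ℂ} (hf : Function.Periodic f L) (n : ℕ) :
    f n = ∑ k ∈ range L, ((L : ℂ)⁻¹ * 𝓕 (fun j : ZMod L => f j.val) k) *
      Complex.exp (2 * π * Complex.I * k / L) ^ n := by
  have := congrFun (LinearEquiv.symm_apply_apply 𝓕 (fun j : ZMod L => f j.val)) n
  rw [hf.val_natCast, invDFT_apply, sum_zmod_eq_sum_range, smul_eq_mul,
    mul_sum] at this
  rw [← this]
  refine sum_congr rfl fun k _ => ?_
  rw [stdAddChar_natCast_mul_natCast, smul_eq_mul]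
  ring

lemma exp_two_pi_I_mul_div_eq_pow (k : ℕ) :
    Complex.exp (2 * π * Complex.I * k / L) = Complex.exp (2 * π * Complex.I / L) ^ k := by
  rw [← Complex.exp_nat_mul]
  ring_nf

lemma exp_two_pi_I_mul_div_pow_self (k : ℕ) :
    Complex.exp (2 * π * Complex.I * k / L) ^ L = 1 := by
  rcases eq_or_ne L 0 with rfl | hL
  · exact pow_zero _
  rw [exp_two_pi_I_mul_div_eq_pow, ← pow_mul, mul_comm k L, pow_mul,
    (Complex.isPrimitiveRoot_exp L hL).pow_eq_one, one_pow]

lemma sum_range_exp_pow_eq_zero {k : ℕ} (hk₀ : 0 < k) (hkL : k < L) :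
    ∑ n ∈ range L, Complex.exp (2 * π * Complex.I * k / L) ^ n = 0 := by
  have hne : Complex.exp (2 * π * Complex.I * k / L) ≠ 1 := fun h => by
    rw [exp_two_pi_I_mul_div_eq_pow,
      (Complex.isPrimitiveRoot_exp L (by omega)).pow_eq_one_iff_dvd] at h
    exact absurd (Nat.le_of_dvd hk₀ h) (by omega)
  rw [geom_sum_eq hne, exp_two_pi_I_mul_div_pow_self, sub_self, zero_div]

lemma periodic_and_sum_eq_zero_iff_exists_fourier (hL : 0 < L) {f : ℕ → ℂ} (hf : f ≠ 0) :
    (Function.Periodic f L ∧ ∑ n ∈ range L, f n = 0) ↔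
      ∃ c : ℕ → ℂ, (∃ k, 0 < k ∧ k < L ∧ c k ≠ 0) ∧
        ∀ n, f n = ∑ k ∈ Ico 1 L, c k * Complex.exp (2 * π * Complex.I * k / L) ^ n := by
  have : NeZero L := ⟨hL.ne'⟩
  constructor
  · rintro ⟨hper, hsum⟩
    set c : ℕ → ℂ := fun k => (L : ℂ)⁻¹ * 𝓕 (fun j : ZMod L => f j.val) k
    have hc₀ : c 0 = 0 := by
      simp only [c, Nat.cast_zero, dft_apply_zero, sum_zmod_eq_sum_range, hper.val_natCast, hsum,
        mul_zero]
    have hexp_range : ∀ n,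
        f n = ∑ k ∈ range L, c k * Complex.exp (2 * π * Complex.I * k / L) ^ n := hper.eq_sum_dft
    have hexp : ∀ n, f n = ∑ k ∈ Ico 1 L, c k * Complex.exp (2 * π * Complex.I * k / L) ^ n :=
      fun n => by rw [hexp_range n, range_eq_Ico, sum_eq_sum_Ico_succ_bot hL, hc₀, zero_mul,
        zero_add]
    refine ⟨c, ?_, hexp⟩
    by_contra! hzero
    refine hf (funext fun n => ?_)
    rw [hexp n, Pi.zero_apply]
    exact sum_eq_zero fun k hk => by
      rw [hzero k (mem_Ico.mp hk).1 (mem_Ico.mp hk).2, zero_mul]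
  · rintro ⟨c, -, hexp⟩
    refine ⟨fun n => ?_, ?_⟩
    · simp only [hexp, pow_add, exp_two_pi_I_mul_div_pow_self, mul_one]
    · rw [sum_congr rfl fun n _ => hexp n, sum_comm]
      exact sum_eq_zero fun k hk => by
        rw [← mul_sum, sum_range_exp_pow_eq_zero (mem_Ico.mp hk).1 (mem_Ico.mp hk).2, mul_zero]

end Fourier

/-- A nonzero series of finite difference dimension is left-separable from the
constant series `f₁ ≡ c ≠ 0` (with `L ≤ N/2`) iff it is a combination of the
exponentials `exp(2πik/L)ⁿ`, `0 < k < L`; equivalently, iff it is `L`-periodic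
with zero sum over a period. -/
theorem left_separable_from_constant_iff
    (N L : ℕ) (hL : 1 < L) (hLN : 2 * L ≤ N)
    (c : ℂ) (hc : c ≠ 0) (f₁ : ℕ → ℂ) (hf₁ : ∀ n, f₁ n = c)
    (f₂ : ℕ → ℂ) (m : ℕ) (hm : 0 < m) (lam : Fin m → ℂ) (P : Fin m → Polynomial ℂ)
    (hinj : Function.Injective lam) (hne : ∀ k, lam k ≠ 0) (hP : ∀ k, P k ≠ 0)
    (hf₂ : ∀ n : ℕ, f₂ n = ∑ k, (P k).eval (n : ℂ) * lam k ^ n)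
    (hdN : 2 * (∑ k, ((P k).natDegree + 1)) ≤ N) :
    ((∀ u ∈ trajSpace f₁ N L, ∀ v ∈ trajSpace f₂ N L, hinner u v = 0) ↔
      ∃ c₂ : ℕ → ℂ, (∃ k, 0 < k ∧ k < L ∧ c₂ k ≠ 0) ∧
        ∀ n : ℕ, f₂ n = ∑ k ∈ Finset.Ico 1 L,
          c₂ k * (Complex.exp (2 * π * Complex.I * k / L)) ^ n) ∧
    ((∀ u ∈ trajSpace f₁ N L, ∀ v ∈ trajSpace f₂ N L, hinner u v = 0) ↔
      ((∀ n : ℕ, f₂ (n + L) = f₂ n) ∧ ∑ n ∈ Finset.range L, f₂ n = 0)) := by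
  have hL0 : 0 < L := by omega
  have : Nonempty (Fin m) := ⟨⟨0, hm⟩⟩
  have hf₂_eq : f₂ = ∑ k, expPoly (P k) (lam k) :=
    funext fun n => by simp only [hf₂, Finset.sum_apply, expPoly]
  have hf₂_ne : f₂ ≠ 0 := hf₂_eq ▸ sum_expPoly_ne_zero hinj hne hP
  set Q := ∏ k, (X - C (lam k)) ^ ((P k).natDegree + 1)
  have hQ_monic : Q.Monic := monic_prod_of_monic _ _ fun k _ => (monic_X_sub_C _).pow _
  have hQ_deg : Q.natDegree = ∑ k, ((P k).natDegree + 1) := by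
    simp [Q, natDegree_prod _ _ fun k _ => pow_ne_zero _ (X_sub_C_ne_zero (lam k))]
  have hQ : aeval shift Q f₂ = 0 := hf₂_eq ▸ aeval_shift_prod_sum_expPoly lam P
  have hortho : (∀ u ∈ trajSpace f₁ N L, ∀ v ∈ trajSpace f₂ N L, hinner u v = 0) ↔
      Function.Periodic f₂ L ∧ ∑ n ∈ range L, f₂ n = 0 := by
    rw [orthogonal_trajSpace_const_iff hc hf₁ f₂ (by omega), ← sum_window_eq_zero_iff]
    exact ⟨fun h => sum_window_eq_zero_of_aeval_shift_eq_zero hQ_monic hQ L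
      fun i hi => h i (by omega), fun h i _ => h i⟩
  exact ⟨hortho.trans (periodic_and_sum_eq_zero_iff_exists_fourier hL0 hf₂_ne), hortho⟩
end

section
/- The polynomials W^{(L,0)}(x) = x^{L-1} + … + x + 1 and W^{(L,1)}(x) = L x^{L-1} + (L−1)x^{L-2} + … + 2x + 1 have no common root for any L ≥ 2. Consequently, no time series of finite difference dimension is left-separable from a series of the form f_n = P_1(n)λ^n with deg P_1 ≥ 1 and λ ≠ 0. -/
/-!
If `z` were a common root, the identity `(1 - z) W^{(L,1)}(z) = W^{(L,0)}(z) - L zᴸ` would force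
`z = 0`, but `W^{(L,0)}(0) = 1`.

For the separability claim, let `g` be a lagged vector of `f₂` and `μ = λ̄₀`. Orthogonality to
all lagged vectors of `f₁` says that `R(x) = ∑ⱼ gⱼ μʲ P̄₁(x + j)` vanishes at `N + 1 - L > deg P₁`
integers, so `R = 0`; its two top coefficients (this is where `deg P₁ ≥ 1` enters) show that the
filters `μʲ` and `(j + 1) μʲ` annihilate every window of `f₂`. A filter `w` turns `f₂` into
another exponential polynomial `∑ₖ Qₖ(n) λₖⁿ` with `deg Qₖ ≤ deg Pₖ`, which vanishes at
`N + 1 - L ≥ ∑ₖ (deg Pₖ + 1)` consecutive integers and is therefore zero; the top coefficient of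
`Qₖ` is `∑ⱼ wⱼ λₖʲ` times that of `Pₖ`. Hence `z = μ λₖ` is a common root of `W^{(L,0)}` and
`W^{(L,1)}`.
-/

open Polynomial Finset

namespace Polynomial

section CommRing

variable {R : Type*} [CommRing R]

theorem coeff_taylor_natDegree_sub_one (p : R[X]) (r : R) :
    (taylor r p).coeff (p.natDegree - 1) =
      p.coeff (p.natDegree - 1) + p.natDegree * p.leadingCoeff * r := by
  have hdeg : (hasseDeriv (p.natDegree - 1) p).natDegree < 2 :=
    (natDegree_hasseDeriv_le p _).trans_lt (by omega)
  rw [taylor_coeff, eval_eq_sum_range' hdeg]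
  simp only [sum_range_succ, sum_range_zero, hasseDeriv_coeff, zero_add, Nat.choose_self]
  rcases Nat.eq_zero_or_pos p.natDegree with hd | hd
  · simp [hd, coeff_eq_zero_of_natDegree_lt (show p.natDegree < 1 by omega)]
  · obtain ⟨e, he⟩ : ∃ e, p.natDegree = e + 1 := ⟨_, (Nat.succ_pred_eq_of_pos hd).symm⟩
    simp [he, add_comm 1 e, leadingCoeff, Nat.choose_succ_self_right]

theorem taylor_sub_self_mem_degreeLT {p : R[X]} {n : ℕ} (hp : p ∈ degreeLT R (n + 1))
    (r : R) : taylor r p - p ∈ degreeLT R n := by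
  rcases eq_or_ne p 0 with rfl | hp0
  · simp
  rw [mem_degreeLT] at hp ⊢
  have := degree_sub_lt_left (degree_taylor p r) (by rwa [Ne, taylor_eq_zero])
    (leadingCoeff_taylor r p)
  rw [degree_taylor] at this
  exact this.trans_le (Order.le_of_lt_succ (by exact_mod_cast hp))

theorem sum_mul_eval_add_mul_pow_add (p : R[X]) (lam : R) (w : ℕ → R) (L i : ℕ) :
    ∑ j ∈ range L, w j * (p.eval ((i + j : ℕ) : R) * lam ^ (i + j)) =
      (∑ j ∈ range L, (w j * lam ^ j) • taylor (j : R) p).eval (i : R) * lam ^ i := by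
  rw [eval_finsetSum, sum_mul]
  refine sum_congr rfl fun j _ => ?_
  rw [eval_smul, taylor_eval, smul_eq_mul, pow_add]
  push_cast
  ring

variable [IsDomain R] {ι : Type*} {s : Finset ι} {p : R[X]}

theorem eq_zero_of_smul_taylor_eq_smul {a b r : R} (hab : a ≠ b)
    (h : a • taylor r p = b • p) : p = 0 := by
  by_contra hp
  have := congrArg (coeff · p.natDegree) h
  simp only [coeff_smul, smul_eq_mul, coeff_taylor_natDegree] at this
  exact hab (mul_right_cancel₀ (leadingCoeff_ne_zero.mpr hp) this)

theorem sum_eq_zero_of_sum_smul_taylor_eq_zero (hp : p ≠ 0) (c a : ι → R)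
    (h : ∑ j ∈ s, c j • taylor (a j) p = 0) : ∑ j ∈ s, c j = 0 := by
  have := congrArg (coeff · p.natDegree) h
  simp only [finsetSum_coeff, coeff_smul, smul_eq_mul, coeff_taylor_natDegree, coeff_zero,
    ← sum_mul] at this
  exact (mul_eq_zero.mp this).resolve_right (leadingCoeff_ne_zero.mpr hp)

theorem sum_mul_eq_zero_of_sum_smul_taylor_eq_zero [CharZero R] (hp : 1 ≤ p.natDegree)
    (c a : ι → R) (h : ∑ j ∈ s, c j • taylor (a j) p = 0) : ∑ j ∈ s, c j * a j = 0 := by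
  have hp0 : p ≠ 0 := ne_zero_of_natDegree_gt hp
  have hc := sum_eq_zero_of_sum_smul_taylor_eq_zero hp0 c a h
  have := congrArg (coeff · (p.natDegree - 1)) h
  simp only [finsetSum_coeff, coeff_smul, smul_eq_mul, coeff_taylor_natDegree_sub_one,
    coeff_zero, mul_add, sum_add_distrib, ← sum_mul, hc, zero_mul, zero_add] at this
  have hd : (p.natDegree : R) * p.leadingCoeff ≠ 0 :=
    mul_ne_zero (by exact_mod_cast (by omega : p.natDegree ≠ 0)) (leadingCoeff_ne_zero.mpr hp0)
  refine (mul_eq_zero.mp ?_).resolve_left hd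
  rw [← this, mul_sum]
  exact sum_congr rfl fun j _ => by ring

theorem eq_zero_of_degree_lt_of_eval_natCast_eq_zero [CharZero R] {n : ℕ} (hp : p.degree < n)
    (h : ∀ t < n, p.eval (t : R) = 0) : p = 0 :=
  eq_zero_of_degree_lt_of_eval_index_eq_zero (s := range n) Nat.cast_injective.injOn
    (by rwa [card_range]) fun t ht => h t (mem_range.mp ht)

end CommRing

end Polynomial

theorem one_sub_mul_sum_range_succ_mul_pow {R : Type*} [CommRing R] (z : R) (L : ℕ) :
    (1 - z) * ∑ k ∈ range L, ((k : R) + 1) * z ^ k = ∑ k ∈ range L, z ^ k - L * z ^ L := by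
  induction L with
  | zero => simp
  | succ L ih =>
    rw [sum_range_succ, sum_range_succ (fun k => z ^ k), mul_add, ih]
    push_cast
    ring

section Domain

variable {R : Type*} [CommRing R] [IsDomain R] [CharZero R]

theorem not_geom_sum_eq_zero_and_sum_range_succ_mul_pow_eq_zero {L : ℕ} (hL : 0 < L) (z : R) :
    ¬(∑ k ∈ range L, z ^ k = 0 ∧ ∑ k ∈ range L, ((k : R) + 1) * z ^ k = 0) := by
  rintro ⟨h₀, h₁⟩
  have hz : (L : R) * z ^ L = 0 := by
    linear_combination one_sub_mul_sum_range_succ_mul_pow z L + h₀ - (1 - z) * h₁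
  obtain rfl : z = 0 := pow_eq_zero_iff hL.ne' |>.mp
    ((mul_eq_zero.mp hz).resolve_left (Nat.cast_ne_zero.mpr hL.ne'))
  simp [zero_geom_sum, hL.ne'] at h₀

theorem Polynomial.eq_zero_of_sum_eval_mul_pow_eq_zero {ι : Type*} [Fintype ι] [DecidableEq ι]
    {lam : ι → R} (hinj : Function.Injective lam) (hlam : ∀ k, lam k ≠ 0) (s : ι → ℕ)
    (Q : ι → R[X]) (hQ : ∀ k, Q k ∈ degreeLT R (s k))
    (hwin : ∀ t < ∑ k, s k, ∑ k, (Q k).eval (t : R) * lam k ^ t = 0) (k : ι) : Q k = 0 := by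
  induction hD : ∑ k, s k generalizing s Q k with
  | zero =>
    have hs : s k = 0 := (sum_eq_zero_iff.mp hD) k (mem_univ k)
    simpa [hs, mem_degreeLT] using hQ k
  | succ D ih =>
    revert k
    by_contra! hne
    obtain ⟨m₀, hm₀⟩ := hne
    have hs : s m₀ ≠ 0 := fun h => hm₀ (by simpa [h, mem_degreeLT] using hQ m₀)
    set s' := Function.update s m₀ (s m₀ - 1)
    have hsum : ∑ k, s' k = D := by
      have h₁ : ∑ k, s' k = s m₀ - 1 + ∑ k ∈ univ.erase m₀, s k := by
        rw [← sdiff_singleton_eq_erase]; exact sum_update_of_mem (mem_univ m₀) s _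
      have h₂ := add_sum_erase univ s (mem_univ m₀)
      omega
    -- Applying `E - lam m₀` (with `E` the shift `t ↦ t + 1`) lowers the degree bound at `m₀`.
    set Q' : ι → R[X] := fun k => lam k • taylor 1 (Q k) - lam m₀ • Q k
    have hQ' : ∀ k, Q' k ∈ degreeLT R (s' k) := by
      intro k
      rcases eq_or_ne k m₀ with rfl | hk
      · have hQk : Q k ∈ degreeLT R (s k - 1 + 1) := by
          rw [Nat.sub_add_cancel (Nat.pos_of_ne_zero hs)]; exact hQ k
        simpa only [Q', s', Function.update_self, ← smul_sub] using
          Submodule.smul_mem _ _ (taylor_sub_self_mem_degreeLT hQk 1)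
      · simpa only [Q', s', Function.update_of_ne hk] using
          sub_mem (Submodule.smul_mem _ _ (taylor_mem_degreeLT.mpr (hQ k)))
            (Submodule.smul_mem _ _ (hQ k))
    have hwin' : ∀ t < ∑ k, s' k, ∑ k, (Q' k).eval (t : R) * lam k ^ t = 0 := by
      intro t ht
      calc ∑ k, (Q' k).eval (t : R) * lam k ^ t
          = ∑ k, (Q k).eval ((t + 1 : ℕ) : R) * lam k ^ (t + 1)
              - lam m₀ * ∑ k, (Q k).eval (t : R) * lam k ^ t := by
            rw [mul_sum, ← sum_sub_distrib]
            refine sum_congr rfl fun k _ => ?_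
            simp only [Q', eval_sub, eval_smul, taylor_eval, smul_eq_mul]
            push_cast
            ring
        _ = 0 := by rw [hwin t (by omega), hwin (t + 1) (by omega)]; ring
    have hother : ∀ k ≠ m₀, Q k = 0 := fun k hk =>
      eq_zero_of_smul_taylor_eq_smul (hinj.ne hk) (sub_eq_zero.mp (ih s' Q' hQ' hwin' k hsum))
    refine hm₀ (eq_zero_of_degree_lt_of_eval_natCast_eq_zero (mem_degreeLT.mp (hQ m₀))
      fun t ht => ?_)
    have h := hwin t <| ht.trans_le <|
      hD ▸ single_le_sum (f := s) (fun _ _ => Nat.zero_le _) (mem_univ m₀)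
    rw [sum_eq_single m₀ (fun k _ hk => by rw [hother k hk, eval_zero, zero_mul])
      (fun h => absurd (mem_univ m₀) h)] at h
    exact (mul_eq_zero.mp h).resolve_right (pow_ne_zero _ (hlam m₀))

def AnnihilatesWindows (w f : ℕ → R) (L M : ℕ) : Prop :=
  ∀ i < M, ∑ j ∈ range L, w j * f (i + j) = 0

theorem AnnihilatesWindows.sum_smul_taylor_eq_zero {ι : Type*} [Fintype ι] [DecidableEq ι]
    {w f : ℕ → R} {L M : ℕ} {P : ι → R[X]} {lam : ι → R} (h : AnnihilatesWindows w f L M)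
    (hinj : Function.Injective lam) (hlam : ∀ k, lam k ≠ 0)
    (hf : ∀ n, f n = ∑ k, (P k).eval (n : R) * lam k ^ n)
    (hM : ∑ k, ((P k).natDegree + 1) ≤ M) (k : ι) :
    ∑ j ∈ range L, (w j * lam k ^ j) • taylor (j : R) (P k) = 0 := by
  have hdeg (k : ι) : ∑ j ∈ range L, (w j * lam k ^ j) • taylor (j : R) (P k) ∈
      degreeLT R ((P k).natDegree + 1) :=
    sum_mem fun j _ => Submodule.smul_mem _ _ <| taylor_mem_degreeLT.mpr <|
      mem_degreeLT.mpr (degree_le_natDegree.trans_lt (by exact_mod_cast Nat.lt_succ_self _))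
  refine eq_zero_of_sum_eval_mul_pow_eq_zero hinj hlam _ _ hdeg (fun t ht => ?_) k
  rw [← h t (by omega)]
  simp only [hf, mul_sum]
  rw [sum_comm]
  exact sum_congr rfl fun k _ => (sum_mul_eval_add_mul_pow_add (P k) (lam k) w L t).symm

theorem AnnihilatesWindows.sum_smul_taylor_eq_zero_of_eq_eval_mul_pow {w f : ℕ → R} {L M : ℕ}
    {p : R[X]} {lam : R} (h : AnnihilatesWindows w f L M) (hlam : lam ≠ 0)
    (hf : ∀ n, f n = p.eval (n : R) * lam ^ n) (hM : p.natDegree < M) :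
    ∑ j ∈ range L, (w j * lam ^ j) • taylor (j : R) p = 0 :=
  h.sum_smul_taylor_eq_zero (P := fun _ : Unit => p) (lam := fun _ => lam)
    (Function.injective_of_subsingleton _) (fun _ => hlam) (by simpa using hf)
    (by simpa using hM) ()

theorem AnnihilatesWindows.sum_mul_pow_eq_zero {ι : Type*} [Fintype ι] [DecidableEq ι]
    {w f : ℕ → R} {L M : ℕ} {P : ι → R[X]} {lam : ι → R} (h : AnnihilatesWindows w f L M)
    (hinj : Function.Injective lam) (hlam : ∀ k, lam k ≠ 0) (hP : ∀ k, P k ≠ 0)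
    (hf : ∀ n, f n = ∑ k, (P k).eval (n : R) * lam k ^ n)
    (hM : ∑ k, ((P k).natDegree + 1) ≤ M) (k : ι) :
    ∑ j ∈ range L, w j * lam k ^ j = 0 :=
  sum_eq_zero_of_sum_smul_taylor_eq_zero (hP k) _ _ (h.sum_smul_taylor_eq_zero hinj hlam hf hM k)

theorem annihilatesWindows_pow_of_forall_annihilatesWindows {f g : ℕ → R} {p : R[X]} {lam : R}
    {L M M' : ℕ} (hlam : lam ≠ 0) (hp : 1 ≤ p.natDegree)
    (hf : ∀ n, f n = p.eval (n : R) * lam ^ n) (hM : p.natDegree < M)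
    (h : ∀ i < M', AnnihilatesWindows (fun j => g (i + j)) f L M) :
    AnnihilatesWindows (fun j => lam ^ j) g L M' ∧
      AnnihilatesWindows (fun j => ((j : R) + 1) * lam ^ j) g L M' := by
  have hR (i : ℕ) (hi : i < M') := (h i hi).sum_smul_taylor_eq_zero_of_eq_eval_mul_pow hlam hf hM
  have hp0 : p ≠ 0 := ne_zero_of_natDegree_gt hp
  refine ⟨fun i hi => ?_, fun i hi => ?_⟩
  · simpa only [mul_comm] using sum_eq_zero_of_sum_smul_taylor_eq_zero hp0 _ _ (hR i hi)
  · calc _ = ∑ j ∈ range L, (g (i + j) * lam ^ j * j + g (i + j) * lam ^ j) :=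
          sum_congr rfl fun j _ => by ring
      _ = 0 := by
        rw [sum_add_distrib, sum_eq_zero_of_sum_smul_taylor_eq_zero hp0 _ _ (hR i hi),
          sum_mul_eq_zero_of_sum_smul_taylor_eq_zero hp _ _ (hR i hi), add_zero]

end Domain

theorem annihilatesWindows_of_forall_hinner_eq_zero {f₁ f₂ : ℕ → ℂ} {N L i : ℕ}
    (horth : ∀ u ∈ trajSpace f₁ N L, ∀ v ∈ trajSpace f₂ N L, hinner u v = 0)
    (hi : i < N + 1 - L) :
    AnnihilatesWindows (fun j => f₂ (i + j)) (fun n => starRingEnd ℂ (f₁ n)) L (N + 1 - L) :=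
  fun i₁ hi₁ => by
    have := horth _ (Submodule.subset_span ⟨i₁, by omega, rfl⟩)
      _ (Submodule.subset_span ⟨i, by omega, rfl⟩)
    rw [hinner, Fin.sum_univ_eq_sum_range (fun j => starRingEnd ℂ (f₁ (i₁ + j)) * f₂ (i + j))]
      at this
    simpa only [mul_comm] using this

/-- The polynomials `W^{(L,0)}(x) = 1 + x + … + x^{L-1}` and
`W^{(L,1)}(x) = 1 + 2x + … + L x^{L-1}` have no common root for `L ≥ 2`;
consequently no series of finite difference dimension is left-separable from a
series `f₁ n = P₁(n) λⁿ` with `deg P₁ ≥ 1` and `λ ≠ 0`. -/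
theorem no_common_root_and_no_separability_from_modulated_polynomial :
    (∀ L : ℕ, 2 ≤ L → ∀ z : ℂ,
      ¬((∑ k ∈ Finset.range L, z ^ k = 0) ∧
        (∑ k ∈ Finset.range L, ((k : ℂ) + 1) * z ^ k = 0))) ∧
    (∀ (N L : ℕ) (f₁ f₂ : ℕ → ℂ) (P₁ : Polynomial ℂ) (lam₀ : ℂ),
      lam₀ ≠ 0 → 1 ≤ P₁.natDegree →
      (∀ n : ℕ, f₁ n = P₁.eval (n : ℂ) * lam₀ ^ n) →
      2 * L ≤ N → P₁.natDegree + 1 < L →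
      ∀ (m : ℕ) (lam : Fin m → ℂ) (P : Fin m → Polynomial ℂ),
        0 < m → Function.Injective lam → (∀ k, lam k ≠ 0) → (∀ k, P k ≠ 0) →
        (∀ n : ℕ, f₂ n = ∑ k, (P k).eval (n : ℂ) * lam k ^ n) →
        2 * (∑ k, ((P k).natDegree + 1)) ≤ N →
        ¬(∀ u ∈ trajSpace f₁ N L, ∀ v ∈ trajSpace f₂ N L, hinner u v = 0)) := by
  refine ⟨fun L hL => not_geom_sum_eq_zero_and_sum_range_succ_mul_pow_eq_zero (by omega), ?_⟩
  intro N L f₁ f₂ P₁ lam₀ hlam₀ hdeg hf₁ hLN hdL m lam P hm hinj hlam hP hf₂ hDN horth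
  obtain ⟨h₀, h₁⟩ := annihilatesWindows_pow_of_forall_annihilatesWindows
    (p := P₁.map (starRingEnd ℂ)) ((_root_.map_ne_zero (starRingEnd ℂ)).mpr hlam₀)
    (by rwa [natDegree_map])
    (fun n => by rw [hf₁, map_mul, map_pow, eval_map, eval₂_at_natCast])
    (by rw [natDegree_map]; omega) fun i hi => annihilatesWindows_of_forall_hinner_eq_zero horth hi
  have hroot (w : ℕ → ℂ) (hw : AnnihilatesWindows w f₂ L (N + 1 - L)) :
      ∑ j ∈ range L, w j * lam ⟨0, hm⟩ ^ j = 0 :=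
    hw.sum_mul_pow_eq_zero hinj hlam hP hf₂ (by omega) _
  exact not_geom_sum_eq_zero_and_sum_range_succ_mul_pow_eq_zero (L := L) (by omega)
    (starRingEnd ℂ lam₀ * lam ⟨0, hm⟩) ⟨by simpa only [mul_pow] using hroot _ h₀,
      by simpa only [mul_pow, mul_assoc] using hroot _ h₁⟩
end

section
/- Let w : [−π, π] → ℝ≥0 be an integrable weight on the unit circle that is not a.e. zero, and define the inner product ⟨p, q⟩_w = (1/2π)∫ p(e^{iθ})\overline{q(e^{iθ})} w(e^{iθ}) dθ on complex polynomials. If Φ_n is a polynomial of degree n orthogonal to all polynomials of degree < n and with ‖Φ_n‖²_w ≠ 0, then every root z_0 of Φ_n satisfies |z_0| < 1. -/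
open Polynomial Real MeasureTheory

/-! If `Φ = (X - z₀) Q` is orthogonal to `Q`, then `zQ = Φ + z₀ Q` is an orthogonal decomposition,
and multiplication by `z` is an isometry on the circle, so `‖Q‖² = ‖Φ‖² + |z₀|² ‖Q‖²`.
As `‖Φ‖² > 0`, this forces `|z₀| < 1`. -/

/-- The inner product on complex polynomials induced by an integrable weight `w`
on the unit circle. -/
noncomputable def circleInner (w : ℝ → ℝ) (p q : Polynomial ℂ) : ℂ :=
  (1 / (2 * π)) * ∫ θ in (-π)..π,
    p.eval (Complex.exp (θ * Complex.I)) *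
      (starRingEnd ℂ) (q.eval (Complex.exp (θ * Complex.I))) * (w θ : ℂ)

noncomputable def circleNormSq (w : ℝ → ℝ) (p : Polynomial ℂ) : ℝ :=
  (1 / (2 * π)) * ∫ θ in (-π)..π, Complex.normSq (p.eval (Complex.exp (θ * Complex.I))) * w θ

section CircleInner

variable {w : ℝ → ℝ}

theorem intervalIntegrable_circleInner_integrand (hw : IntervalIntegrable w volume (-π) π)
    (p q : Polynomial ℂ) :
    IntervalIntegrable (fun θ : ℝ => p.eval (Complex.exp (θ * Complex.I)) *
      (starRingEnd ℂ) (q.eval (Complex.exp (θ * Complex.I))) * (w θ : ℂ)) volume (-π) π := by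
  have hexp : Continuous fun θ : ℝ => Complex.exp (θ * Complex.I) := by fun_prop
  have hpq : Continuous fun θ : ℝ => p.eval (Complex.exp (θ * Complex.I)) *
      (starRingEnd ℂ) (q.eval (Complex.exp (θ * Complex.I))) :=
    (p.continuous.comp hexp).mul (Complex.continuous_conj.comp (q.continuous.comp hexp))
  have hw' : IntervalIntegrable (fun θ => (w θ : ℂ)) volume (-π) π := ⟨hw.1.ofReal, hw.2.ofReal⟩
  exact hw'.continuousOn_mul hpq.continuousOn

theorem circleInner_add_left (hw : IntervalIntegrable w volume (-π) π) (p₁ p₂ q : Polynomial ℂ) :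
    circleInner w (p₁ + p₂) q = circleInner w p₁ q + circleInner w p₂ q := by
  rw [circleInner, circleInner, circleInner, ← mul_add, ← intervalIntegral.integral_add
    (intervalIntegrable_circleInner_integrand hw p₁ q)
    (intervalIntegrable_circleInner_integrand hw p₂ q)]
  simp only [eval_add, add_mul]

theorem circleInner_C_mul_left (c : ℂ) (p q : Polynomial ℂ) :
    circleInner w (C c * p) q = c * circleInner w p q := by
  simp only [circleInner, eval_mul, eval_C, mul_assoc, intervalIntegral.integral_const_mul]
  ring

theorem circleInner_conj_symm (p q : Polynomial ℂ) :
    starRingEnd ℂ (circleInner w p q) = circleInner w q p := by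
  have hconj : ∀ f : ℝ → ℂ, starRingEnd ℂ (∫ θ in (-π)..π, f θ) =
      ∫ θ in (-π)..π, starRingEnd ℂ (f θ) := by
    intro f
    simp [intervalIntegral, ← integral_conj]
  rw [circleInner, circleInner, map_mul, hconj]
  simp only [map_mul, map_div₀, map_one, map_ofNat, Complex.conj_ofReal, Complex.conj_conj]
  congr 2 with θ
  ring

theorem circleInner_add_right (hw : IntervalIntegrable w volume (-π) π) (p q₁ q₂ : Polynomial ℂ) :
    circleInner w p (q₁ + q₂) = circleInner w p q₁ + circleInner w p q₂ := by
  rw [← circleInner_conj_symm, circleInner_add_left hw, map_add, circleInner_conj_symm,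
    circleInner_conj_symm]

theorem circleInner_C_mul_right (c : ℂ) (p q : Polynomial ℂ) :
    circleInner w p (C c * q) = starRingEnd ℂ c * circleInner w p q := by
  rw [← circleInner_conj_symm, circleInner_C_mul_left, map_mul, circleInner_conj_symm]

theorem circleInner_self (p : Polynomial ℂ) : circleInner w p p = circleNormSq w p := by
  rw [circleInner, circleNormSq, Complex.ofReal_mul, ← intervalIntegral.integral_ofReal]
  push_cast
  simp only [Complex.mul_conj]

theorem circleNormSq_nonneg (hw : ∀ θ, 0 ≤ w θ) (p : Polynomial ℂ) : 0 ≤ circleNormSq w p :=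
  mul_nonneg (by positivity) <| intervalIntegral.integral_nonneg (by linarith [pi_pos])
    fun θ _ => mul_nonneg (Complex.normSq_nonneg _) (hw θ)

theorem circleNormSq_X_mul (p : Polynomial ℂ) : circleNormSq w (X * p) = circleNormSq w p := by
  simp only [circleNormSq, eval_mul, eval_X, map_mul, Complex.normSq_eq_norm_sq,
    Complex.norm_exp_ofReal_mul_I, one_pow, one_mul]

theorem circleNormSq_eq_of_orthogonal (hw : IntervalIntegrable w volume (-π) π)
    {Φ Q : Polynomial ℂ} {z₀ : ℂ} (hΦ : Φ = (X - C z₀) * Q) (horth : circleInner w Φ Q = 0) :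
    circleNormSq w Q = circleNormSq w Φ + Complex.normSq z₀ * circleNormSq w Q := by
  have hsplit : X * Q = Φ + C z₀ * Q := by rw [hΦ]; ring
  have horth' : circleInner w Q Φ = 0 := by rw [← circleInner_conj_symm, horth, map_zero]
  have h := circleInner_self (w := w) (X * Q)
  rw [circleNormSq_X_mul, hsplit, circleInner_add_left hw, circleInner_add_right hw,
    circleInner_add_right hw, circleInner_C_mul_left, circleInner_C_mul_left,
    circleInner_C_mul_right, circleInner_C_mul_right, horth, horth', circleInner_self,
    circleInner_self, ← mul_assoc, Complex.mul_conj] at h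
  have hC : (circleNormSq w Q : ℂ) = circleNormSq w Φ + Complex.normSq z₀ * circleNormSq w Q := by
    linear_combination -h
  exact_mod_cast hC

end CircleInner

theorem roots_of_orthogonal_polynomial_inside_unit_disc_general
    (w : ℝ → ℝ) (hw0 : ∀ θ, 0 ≤ w θ)
    (hwint : IntervalIntegrable w MeasureTheory.volume (-π) π)
    (n : ℕ) (Φ : Polynomial ℂ) (hdeg : Φ.degree = n)
    (horth : ∀ q : Polynomial ℂ, q.degree < (n : WithBot ℕ) → circleInner w Φ q = 0)
    (hnorm : circleInner w Φ Φ ≠ 0) :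
    ∀ z₀ : ℂ, Φ.eval z₀ = 0 → ‖z₀‖ < 1 := by
  intro z₀ hz
  have hΦ : Φ ≠ 0 := by rintro rfl; simp at hdeg
  set Q := Φ /ₘ (X - C z₀)
  have hfactor : Φ = (X - C z₀) * Q := (mul_divByMonic_eq_iff_isRoot.mpr hz).symm
  have hQdeg : Q.degree < n :=
    hdeg ▸ degree_divByMonic_lt Φ (X - C z₀) hΦ (by rw [degree_X_sub_C]; exact one_pos)
  have hkey := circleNormSq_eq_of_orthogonal hwint hfactor (horth Q hQdeg)
  have hΦpos : 0 < circleNormSq w Φ :=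
    (circleNormSq_nonneg hw0 Φ).lt_of_ne' fun h => hnorm (by rw [circleInner_self, h]; simp)
  have hQ := circleNormSq_nonneg hw0 Q
  have hnormSq : Complex.normSq z₀ < 1 := by nlinarith
  rwa [Complex.normSq_eq_norm_sq, sq_lt_one_iff₀ (norm_nonneg z₀)] at hnormSq

/-- All roots of a polynomial of degree `n` which is orthogonal (w.r.t. a
nonnegative, integrable, not-a.e.-zero weight on the unit circle) to all
polynomials of degree `< n`, and has nonzero norm, lie strictly inside the unit
circle. -/
theorem roots_of_orthogonal_polynomial_inside_unit_disc
    (w : ℝ → ℝ) (hw0 : ∀ θ, 0 ≤ w θ)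
    (hwint : IntervalIntegrable w MeasureTheory.volume (-π) π)
    (hwne : ¬ (∀ᵐ θ ∂(MeasureTheory.volume.restrict (Set.Ioc (-π) π)), w θ = 0))
    (n : ℕ) (Φ : Polynomial ℂ) (hdeg : Φ.degree = n)
    (horth : ∀ q : Polynomial ℂ, q.degree < (n : WithBot ℕ) → circleInner w Φ q = 0)
    (hnorm : circleInner w Φ Φ ≠ 0) :
    ∀ z₀ : ℂ, Φ.eval z₀ = 0 → ‖z₀‖ < 1 :=
  roots_of_orthogonal_polynomial_inside_unit_disc_general w hw0 hwint n Φ hdeg horth hnorm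
end
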